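/- arXiv:hep-th/0412327 — 4 statements merged into one kernel-verified Lean document; each statement's English description precedes it below -/
import Mathlib

section
/- The number of plane partitions of n whose main diagonal partition equals a fixed partition μ, counted with weight q^n, is given by ∑_{π : π(0)=μ} q^{|π|} = s_μ(q^{-ρ})^2, where s_μ(q^{-ρ}) denotes s_μ evaluated at x_i = q^{i-1/2}. -/
/-- A plane partition: an array of non-negative integers, weakly decreasing along
rows and columns, with finite support (hence finite total size). -/
structure PlanePartition where
  part : ℕ → ℕ → ℕ
  row_antitone : ∀ i j, part (i + 1) j ≤ part i j
  col_antitone : ∀ i j, part i (j + 1) ≤ part i j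
  support_finite : (Function.support fun ij : ℕ × ℕ => part ij.1 ij.2).Finite

/-- `|π|`: the total number of cubes of the plane partition. -/
noncomputable def PlanePartition.size (π : PlanePartition) : ℕ :=
  ∑ᶠ ij : ℕ × ℕ, π.part ij.1 ij.2

/-- `|π(0)|`: the size of the main diagonal partition of a plane partition. -/
noncomputable def PlanePartition.diagSize (π : PlanePartition) : ℕ :=
  ∑ᶠ i : ℕ, π.part i i

namespace PPAux

open Finset

variable {μ : YoungDiagram}

/-- number of rows -/
def R (μ : YoungDiagram) : ℕ := μ.colLen 0

lemma rowLen_eq_zero {i : ℕ} (h : R μ ≤ i) : μ.rowLen i = 0 := by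
  by_contra h0
  have h1 : (i, 0) ∈ μ := YoungDiagram.mem_iff_lt_rowLen.2 (Nat.pos_of_ne_zero h0)
  have h2 := YoungDiagram.mem_iff_lt_colLen.1 h1
  exact absurd h2 (by simpa [R] using h)

lemma cells_eq_biUnion :
    μ.cells = (range (R μ)).biUnion (fun i => {i} ×ˢ range (μ.rowLen i)) := by
  ext ⟨a, b⟩
  simp only [Finset.mem_biUnion, Finset.mem_product, Finset.mem_singleton, Finset.mem_range]
  constructor
  · intro h
    have h1 : (a, b) ∈ μ := h
    have hb := YoungDiagram.mem_iff_lt_rowLen.1 h1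
    have ha : (a, 0) ∈ μ := μ.up_left_mem le_rfl (Nat.zero_le _) h1
    exact ⟨a, YoungDiagram.mem_iff_lt_colLen.1 ha, rfl, hb⟩
  · rintro ⟨i, _, rfl, hb⟩
    exact YoungDiagram.mem_iff_lt_rowLen.2 hb

lemma sum_cells (F : ℕ → ℕ → ℕ) :
    ∑ c ∈ μ.cells, F c.1 c.2 = ∑ i ∈ range (R μ), ∑ j ∈ range (μ.rowLen i), F i j := by
  rw [cells_eq_biUnion, Finset.sum_biUnion]
  · apply Finset.sum_congr rfl
    intro i _
    rw [Finset.sum_product]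
    simp
  · intro x _ y _ hxy
    simp only [Finset.disjoint_left]
    rintro ⟨a, b⟩ ha hb
    simp only [Finset.mem_product, Finset.mem_singleton] at ha hb
    exact hxy (ha.1.symm.trans hb.1)

/-- size of a row-length function, summed over the rows of μ -/
def siz (μ : YoungDiagram) (f : ℕ → ℕ) : ℕ := ∑ i ∈ range (R μ), f i

lemma siz_mono {f g : ℕ → ℕ} (h : ∀ i, f i ≤ g i) : siz μ f ≤ siz μ g :=
  Finset.sum_le_sum fun i _ => h i

lemma siz_rl : siz μ (fun i => μ.rowLen i) = μ.cells.card := by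
  have := sum_cells (μ := μ) (fun _ _ => 1)
  simp only [Finset.sum_const, smul_eq_mul, mul_one, Finset.card_range] at this
  rw [siz, ← this]

lemma eq_zero_of_siz_eq_zero {f : ℕ → ℕ} (hle : ∀ i, f i ≤ μ.rowLen i)
    (h : siz μ f = 0) : ∀ i, f i = 0 := by
  intro i
  rcases lt_or_ge i (R μ) with hi | hi
  · exact Finset.sum_eq_zero_iff.1 h i (Finset.mem_range.2 hi)
  · have := hle i
    rw [rowLen_eq_zero hi] at this
    omega

lemma siz_le_card {f : ℕ → ℕ} (hle : ∀ i, f i ≤ μ.rowLen i) : siz μ f ≤ μ.cells.card := by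
  rw [← siz_rl]; exact siz_mono hle

lemma eq_rl_of_siz {f : ℕ → ℕ} (hle : ∀ i, f i ≤ μ.rowLen i)
    (h : siz μ f = μ.cells.card) : ∀ i, f i = μ.rowLen i := by
  intro i
  rcases lt_or_ge i (R μ) with hi | hi
  · by_contra hne
    have hlt : f i < μ.rowLen i := lt_of_le_of_ne (hle i) hne
    have : siz μ f < siz μ (fun i => μ.rowLen i) := by
      apply Finset.sum_lt_sum (fun j _ => hle j) ⟨i, Finset.mem_range.2 hi, hlt⟩
    rw [siz_rl] at this; omega
  · have h1 := hle i
    rw [rowLen_eq_zero hi] at h1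
    rw [rowLen_eq_zero hi]; omega

/-- `f/g` is a horizontal strip: `g ⊆ f` and at most one cell per column. -/
def HS (g f : ℕ → ℕ) : Prop := (∀ i, g i ≤ f i) ∧ (∀ i, f (i + 1) ≤ g i)

/-- descending chains of partitions starting at μ with horizontal strip steps,
ending at the empty partition -/
structure DC (μ : YoungDiagram) where
  u : ℕ → ℕ → ℕ
  zero : ∀ i, u 0 i = μ.rowLen i
  hs : ∀ k, HS (u (k + 1)) (u k)
  fin : ∃ N, ∀ i, u N i = 0

/-- ascending chains of partitions from the empty partition to μ with
horizontal strip steps -/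
structure UC (μ : YoungDiagram) where
  v : ℕ → ℕ → ℕ
  zero : ∀ i, v 0 i = 0
  hs : ∀ k, HS (v k) (v (k + 1))
  le : ∀ k i, v k i ≤ μ.rowLen i
  top : ∃ N, ∀ i, v N i = μ.rowLen i

lemma DC.ext {d d' : DC μ} (h : d.u = d'.u) : d = d' := by
  cases d; cases d'; cases h; rfl

lemma UC.ext {c c' : UC μ} (h : c.v = c'.v) : c = c' := by
  cases c; cases c'; cases h; rfl

lemma DC.mono (d : DC μ) {k k' : ℕ} (h : k ≤ k') : ∀ i, d.u k' i ≤ d.u k i := by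
  induction k' with
  | zero =>
    have hk : k = 0 := Nat.le_zero.1 h
    subst hk; exact fun i => le_rfl
  | succ n ih =>
    rcases Nat.eq_or_lt_of_le h with heq | hlt
    · subst heq; exact fun i => le_rfl
    · exact fun i => le_trans ((d.hs n).1 i) (ih (by omega) i)

lemma DC.le_rl (d : DC μ) (k i : ℕ) : d.u k i ≤ μ.rowLen i := by
  have := d.mono (Nat.zero_le k) i
  rwa [d.zero i] at this

lemma DC.zero_of (d : DC μ) {N : ℕ} (hN : ∀ i, d.u N i = 0) {k : ℕ} (h : N ≤ k) :
    ∀ i, d.u k i = 0 := fun i => le_antisymm (le_trans (d.mono h i) (le_of_eq (hN i))) (Nat.zero_le _)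

lemma UC.mono (c : UC μ) {k k' : ℕ} (h : k ≤ k') : ∀ i, c.v k i ≤ c.v k' i := by
  induction k' with
  | zero =>
    have hk : k = 0 := Nat.le_zero.1 h
    subst hk; exact fun i => le_rfl
  | succ n ih =>
    rcases Nat.eq_or_lt_of_le h with heq | hlt
    · subst heq; exact fun i => le_rfl
    · exact fun i => le_trans (ih (by omega) i) ((c.hs n).1 i)

lemma UC.rl_of (c : UC μ) {N : ℕ} (hN : ∀ i, c.v N i = μ.rowLen i) {k : ℕ} (h : N ≤ k) :
    ∀ i, c.v k i = μ.rowLen i :=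
  fun i => le_antisymm (c.le k i) (le_of_le_of_eq (le_of_eq (hN i).symm) rfl |>.trans (c.mono h i))


/-! ### Weights and contents -/

noncomputable def DC.w (d : DC μ) : ℕ := ∑ᶠ k, siz μ (d.u (k + 1))

noncomputable def UC.w (c : UC μ) : ℕ := ∑ᶠ k, (μ.cells.card - siz μ (c.v (k + 1)))

def DC.cont (d : DC μ) : ℕ → ℕ := fun k => siz μ (d.u k) - siz μ (d.u (k + 1))

def UC.cont (c : UC μ) : ℕ → ℕ := fun k => siz μ (c.v (k + 1)) - siz μ (c.v k)

noncomputable def cw (α : ℕ → ℕ) : ℕ := ∑ᶠ k, k * α k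

/-- Abel summation -/
lemma abel_aux (f : ℕ → ℕ) (hmono : ∀ k, f (k + 1) ≤ f k) (M : ℕ) :
    (∑ k ∈ range M, k * (f k - f (k + 1))) + M * f M = ∑ k ∈ range M, f (k + 1) := by
  induction M with
  | zero => simp
  | succ n ih =>
    rw [Finset.sum_range_succ, Finset.sum_range_succ (fun k => f (k + 1))]
    have h1 := hmono n
    have e1 : n * (f n - f (n + 1)) + n * f (n + 1) = n * f n := by
      rw [← Nat.mul_add]; congr 1; omega
    have e2 : (n + 1) * f (n + 1) = n * f (n + 1) + f (n + 1) := by ring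
    omega

lemma abel (f : ℕ → ℕ) (hmono : ∀ k, f (k + 1) ≤ f k) {M : ℕ} (hM : f M = 0) :
    ∑ k ∈ range M, f (k + 1) = ∑ k ∈ range M, k * (f k - f (k + 1)) := by
  have := abel_aux f hmono M
  rw [hM] at this
  omega

lemma finsum_eq_range {f : ℕ → ℕ} {M : ℕ} (h : ∀ k, M ≤ k → f k = 0) :
    ∑ᶠ k, f k = ∑ k ∈ range M, f k := by
  apply finsum_eq_sum_of_support_subset
  intro k hk
  simp only [Function.mem_support] at hk
  simp only [Finset.coe_range, Set.mem_Iio]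
  by_contra hM
  exact hk (h k (by omega))

lemma DC.sizes_zero (d : DC μ) {k : ℕ} (h : d.fin.choose ≤ k) : siz μ (d.u k) = 0 := by
  apply Finset.sum_eq_zero
  intro i _
  exact d.zero_of d.fin.choose_spec h i

lemma DC.w_eq (d : DC μ) {M : ℕ} (hM : d.fin.choose ≤ M) :
    d.w = ∑ k ∈ range M, siz μ (d.u (k + 1)) := by
  apply finsum_eq_range
  intro k hk
  exact d.sizes_zero (by omega)

lemma DC.w_eq_cw (d : DC μ) : d.w = cw d.cont := by
  set N := d.fin.choose with hN
  rw [d.w_eq (le_refl N)]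
  rw [abel (fun k => siz μ (d.u k)) (fun k => siz_mono ((d.hs k).1)) (d.sizes_zero (le_refl N))]
  rw [cw, finsum_eq_range (M := N)]
  · rfl
  · intro k hk
    have h1 : siz μ (d.u k) = 0 := d.sizes_zero hk
    have h2 : siz μ (d.u (k+1)) = 0 := d.sizes_zero (by omega)
    simp [DC.cont, h1, h2]

lemma UC.sizes_card (c : UC μ) {k : ℕ} (h : c.top.choose ≤ k) : siz μ (c.v k) = μ.cells.card := by
  rw [← siz_rl]
  exact Finset.sum_congr rfl fun i _ => c.rl_of c.top.choose_spec h i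

lemma UC.w_eq (c : UC μ) {M : ℕ} (hM : c.top.choose ≤ M) :
    c.w = ∑ k ∈ range M, (μ.cells.card - siz μ (c.v (k + 1))) := by
  apply finsum_eq_range
  intro k hk
  rw [c.sizes_card (by omega : c.top.choose ≤ k + 1)]
  omega

lemma UC.w_eq_cw (c : UC μ) : c.w = cw c.cont := by
  set N := c.top.choose with hN
  rw [c.w_eq (le_refl N)]
  have hmono : ∀ k, (fun k => μ.cells.card - siz μ (c.v k)) (k + 1) ≤
      (fun k => μ.cells.card - siz μ (c.v k)) k := by
    intro k
    have := siz_mono (μ := μ) ((c.hs k).1)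
    simp only
    omega
  have hM0 : (fun k => μ.cells.card - siz μ (c.v k)) N = 0 := by
    simp only [c.sizes_card (le_refl N)]
    omega
  have habel := abel (fun k => μ.cells.card - siz μ (c.v k)) hmono hM0
  rw [habel, cw, finsum_eq_range (M := N)]
  · apply Finset.sum_congr rfl
    intro k _
    have h1 : siz μ (c.v k) ≤ siz μ (c.v (k + 1)) := siz_mono ((c.hs k).1)
    have h2 : siz μ (c.v (k + 1)) ≤ μ.cells.card := siz_le_card (c.le (k + 1))
    simp only [UC.cont]
    congr 1
    omega
  · intro k hk
    have h1 : siz μ (c.v k) = μ.cells.card := c.sizes_card hk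
    have h2 : siz μ (c.v (k + 1)) = μ.cells.card := c.sizes_card (by omega)
    simp [UC.cont, h1, h2]


/-! ### SSYT and ascending chains -/

lemma filter_lt_card {n c : ℕ} : ((range n).filter (fun j => j < c)).card = min c n := by
  have h : (range n).filter (fun j => j < c) = range (min c n) := by
    ext x
    simp only [Finset.mem_filter, Finset.mem_range]
    omega
  rw [h, Finset.card_range]

lemma sum_sub_distrib {s : Finset ℕ} {f g : ℕ → ℕ} (h : ∀ i ∈ s, g i ≤ f i) :
    ∑ i ∈ s, f i - ∑ i ∈ s, g i = ∑ i ∈ s, (f i - g i) := by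
  have h2 : ∑ i ∈ s, (f i - g i) + ∑ i ∈ s, g i = ∑ i ∈ s, f i := by
    rw [← Finset.sum_add_distrib]
    apply Finset.sum_congr rfl
    intro i hi
    have := h i hi
    omega
  omega

lemma tabV_mem (T : SemistandardYoungTableau μ) (k i j : ℕ) :
    j < ((range (μ.rowLen i)).filter (fun j => T i j < k)).card ↔
      j < μ.rowLen i ∧ T i j < k := by
  set S := (range (μ.rowLen i)).filter (fun j => T i j < k) with hS
  have hsub : S ⊆ range (μ.rowLen i) := Finset.filter_subset _ _
  constructor
  · intro hj
    have hcard : S.card ≤ μ.rowLen i := by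
      have := Finset.card_le_card hsub
      simpa using this
    have hjr : j < μ.rowLen i := lt_of_lt_of_le hj hcard
    refine ⟨hjr, ?_⟩
    by_contra hT
    have hSsub : S ⊆ range j := by
      intro x hx
      simp only [hS, Finset.mem_filter, Finset.mem_range] at hx
      simp only [Finset.mem_range]
      by_contra hxj
      have hle : T i j ≤ T i x := by
        rcases Nat.eq_or_lt_of_le (not_lt.1 hxj) with heq | hlt
        · rw [heq]
        · exact T.row_weak hlt (YoungDiagram.mem_iff_lt_rowLen.2 hx.1)
      omega
    have := Finset.card_le_card hSsub
    simp only [Finset.card_range] at this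
    omega
  · rintro ⟨hjr, hT⟩
    have hsub2 : range (j + 1) ⊆ S := by
      intro x hx
      simp only [Finset.mem_range] at hx
      simp only [hS, Finset.mem_filter, Finset.mem_range]
      have hxr : x < μ.rowLen i := by omega
      have hle : T i x ≤ T i j := by
        rcases Nat.eq_or_lt_of_le (Nat.lt_succ_iff.1 hx) with heq | hlt
        · rw [heq]
        · exact T.row_weak hlt (YoungDiagram.mem_iff_lt_rowLen.2 hjr)
      exact ⟨hxr, by omega⟩
    have := Finset.card_le_card hsub2
    simp only [Finset.card_range] at this
    omega

/-- the ascending chain of an SSYT -/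
def tabUC (T : SemistandardYoungTableau μ) : UC μ where
  v := fun k i => ((range (μ.rowLen i)).filter (fun j => T i j < k)).card
  zero := by intro i; simp
  hs := by
    intro k
    constructor
    · intro i
      show ((range (μ.rowLen i)).filter (fun j => T i j < k)).card ≤
        ((range (μ.rowLen i)).filter (fun j => T i j < k + 1)).card
      apply Finset.card_le_card
      intro x hx
      simp only [Finset.mem_filter, Finset.mem_range] at hx ⊢
      exact ⟨hx.1, by omega⟩
    · intro i
      show ((range (μ.rowLen (i + 1))).filter (fun j => T (i + 1) j < k + 1)).card ≤
        ((range (μ.rowLen i)).filter (fun j => T i j < k)).card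
      set a := ((range (μ.rowLen (i + 1))).filter (fun j => T (i + 1) j < k + 1)).card with ha
      rcases Nat.eq_zero_or_pos a with h0 | hpos
      · omega
      · have hm := (tabV_mem T (k + 1) (i + 1) (a - 1)).1 (by omega)
        have hmem : (i + 1, a - 1) ∈ μ := YoungDiagram.mem_iff_lt_rowLen.2 hm.1
        have hcol : T i (a - 1) < T (i + 1) (a - 1) := T.col_strict (by omega) hmem
        have hrl : a - 1 < μ.rowLen i := lt_of_lt_of_le hm.1 (μ.rowLen_anti i (i + 1) (by omega))
        have := (tabV_mem T k i (a - 1)).2 ⟨hrl, by omega⟩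
        omega
  le := by
    intro k i
    have := Finset.card_le_card (Finset.filter_subset (fun j => T i j < k) (range (μ.rowLen i)))
    simpa using this
  top := by
    refine ⟨μ.cells.sup (fun c => T c.1 c.2) + 1, fun i => ?_⟩
    have : (range (μ.rowLen i)).filter
        (fun j => T i j < μ.cells.sup (fun c => T c.1 c.2) + 1) = range (μ.rowLen i) := by
      apply Finset.filter_true_of_mem
      intro j hj
      simp only [Finset.mem_range] at hj
      have hmem : (i, j) ∈ μ.cells := (YoungDiagram.mem_cells _).2 (YoungDiagram.mem_iff_lt_rowLen.2 hj)
      have := Finset.le_sup (f := fun c : ℕ × ℕ => T c.1 c.2) hmem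
      simp only at this
      omega
    show ((range (μ.rowLen i)).filter
      (fun j => T i j < μ.cells.sup (fun c => T c.1 c.2) + 1)).card = μ.rowLen i
    rw [this, Finset.card_range]

/-- the entry function of the SSYT of an ascending chain -/
noncomputable def ent (c : UC μ) (i j : ℕ) : ℕ :=
  if j < μ.rowLen i then sInf {k | j < c.v (k + 1) i} else 0

lemma ent_lt (c : UC μ) {i j : ℕ} (hj : j < μ.rowLen i) {k : ℕ} :
    ent c i j < k ↔ j < c.v k i := by
  have hne : {k | j < c.v (k + 1) i}.Nonempty := by
    obtain ⟨N, hN⟩ := c.top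
    rcases Nat.eq_zero_or_pos N with rfl | hNpos
    · exfalso
      have h0 := c.zero i
      have h1 := hN i
      omega
    · refine ⟨N - 1, ?_⟩
      simp only [Set.mem_setOf_eq]
      rw [show N - 1 + 1 = N by omega, hN i]
      exact hj
  rw [ent, if_pos hj]
  constructor
  · intro h
    have hmem := Nat.sInf_mem hne
    have h1 : j < c.v (sInf {k | j < c.v (k + 1) i} + 1) i := hmem
    exact lt_of_lt_of_le h1 (c.mono (by omega) i)
  · intro h
    rcases Nat.eq_zero_or_pos k with rfl | hk
    · have := c.zero i
      omega
    · have hmem : k - 1 ∈ {k | j < c.v (k + 1) i} := by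
        simp only [Set.mem_setOf_eq]
        rw [show k - 1 + 1 = k by omega]
        exact h
      have := Nat.sInf_le hmem
      omega

lemma ent_col_succ (c : UC μ) {i j : ℕ} (h : (i + 1, j) ∈ μ) :
    ent c i j < ent c (i + 1) j := by
  have hj1 : j < μ.rowLen (i + 1) := YoungDiagram.mem_iff_lt_rowLen.1 h
  have hj0 : j < μ.rowLen i := lt_of_lt_of_le hj1 (μ.rowLen_anti i (i + 1) (by omega))
  have h1 : j < c.v (ent c (i + 1) j + 1) (i + 1) := (ent_lt c hj1).1 (by omega)
  have h2 : j < c.v (ent c (i + 1) j) i := lt_of_lt_of_le h1 ((c.hs (ent c (i + 1) j)).2 i)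
  exact (ent_lt c hj0).2 h2

lemma ent_col (c : UC μ) {i1 i2 j : ℕ} (h : i1 < i2) (hm : (i2, j) ∈ μ) :
    ent c i1 j < ent c i2 j := by
  induction i2 with
  | zero => omega
  | succ n ih =>
    have hsucc := ent_col_succ c (i := n) (j := j) hm
    rcases Nat.lt_succ_iff_lt_or_eq.1 h with h' | h'
    · have hmn : (n, j) ∈ μ := μ.up_left_mem (by omega) le_rfl hm
      exact lt_trans (ih h' hmn) hsucc
    · subst h'
      exact hsucc

/-- the SSYT of an ascending chain -/
noncomputable def ucTab (c : UC μ) : SemistandardYoungTableau μ where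
  entry := ent c
  row_weak' := by
    intro i j1 j2 hj hm
    have hj2 : j2 < μ.rowLen i := YoungDiagram.mem_iff_lt_rowLen.1 hm
    have hj1 : j1 < μ.rowLen i := by omega
    have h1 : j2 < c.v (ent c i j2 + 1) i := (ent_lt c hj2).1 (by omega)
    have h2 : j1 < c.v (ent c i j2 + 1) i := by omega
    have := (ent_lt c hj1).2 h2
    omega
  col_strict' := by
    intro i1 i2 j h hm
    exact ent_col c h hm
  zeros' := by
    intro i j hm
    rw [ent, if_neg]
    intro hj
    exact hm (YoungDiagram.mem_iff_lt_rowLen.2 hj)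

/-- SSYT are equivalent to ascending chains -/
noncomputable def E2 (μ : YoungDiagram) : SemistandardYoungTableau μ ≃ UC μ where
  toFun := tabUC
  invFun := ucTab
  left_inv := by
    intro T
    ext i j
    show ent (tabUC T) i j = T i j
    by_cases hj : j < μ.rowLen i
    · rw [ent, if_pos hj]
      have hset : {k | j < (tabUC T).v (k + 1) i} = {k | T i j ≤ k} := by
        ext k
        simp only [Set.mem_setOf_eq]
        have := tabV_mem T (k + 1) i j
        show j < ((range (μ.rowLen i)).filter (fun j => T i j < k + 1)).card ↔ _
        rw [this]
        omega
      rw [hset]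
      have h1 : sInf {k | T i j ≤ k} ≤ T i j := Nat.sInf_le (by simp)
      have h2 : T i j ≤ sInf {k | T i j ≤ k} := Nat.sInf_mem (⟨T i j, by simp⟩ : {k | T i j ≤ k}.Nonempty)
      omega
    · rw [ent, if_neg hj, T.zeros (fun hmem => hj (YoungDiagram.mem_iff_lt_rowLen.1 hmem))]
  right_inv := by
    intro c
    apply UC.ext
    funext k i
    show ((range (μ.rowLen i)).filter (fun j => ent c i j < k)).card = c.v k i
    have hcongr : (range (μ.rowLen i)).filter (fun j => ent c i j < k) =
        (range (μ.rowLen i)).filter (fun j => j < c.v k i) := by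
      apply Finset.filter_congr
      intro j hj
      simp only [Finset.mem_range] at hj
      simp [ent_lt c hj]
    rw [hcongr, filter_lt_card]
    have := c.le k i
    omega

def wSSYT (T : SemistandardYoungTableau μ) : ℕ := ∑ c ∈ μ.cells, T c.1 c.2

lemma w_tabUC (T : SemistandardYoungTableau μ) : (tabUC T).w = wSSYT T := by
  set M := (tabUC T).top.choose ⊔ (μ.cells.sup (fun c => T c.1 c.2) + 1) with hM
  rw [(tabUC T).w_eq (M := M) (by rw [hM]; exact le_sup_left)]
  have hstep : ∀ k, μ.cells.card - siz μ ((tabUC T).v (k + 1)) =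
      ∑ i ∈ range (R μ), ((range (μ.rowLen i)).filter (fun j => k < T i j)).card := by
    intro k
    rw [← siz_rl, siz, siz, sum_sub_distrib (fun i _ => by
      have := Finset.card_le_card (Finset.filter_subset (fun j => T i j < k + 1) (range (μ.rowLen i)))
      exact le_of_le_of_eq this (Finset.card_range _))]
    apply Finset.sum_congr rfl
    intro i _
    have hsplit := Finset.card_filter_add_card_filter_not
      (s := range (μ.rowLen i)) (p := fun j => T i j < k + 1)
    have hcongr : (range (μ.rowLen i)).filter (fun j => ¬ T i j < k + 1) =
        (range (μ.rowLen i)).filter (fun j => k < T i j) := by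
      apply Finset.filter_congr
      intro j _
      constructor <;> (intro; omega)
    rw [← hcongr]
    simp only [Finset.card_range] at hsplit
    show μ.rowLen i - ((range (μ.rowLen i)).filter (fun j => T i j < k + 1)).card = _
    omega
  calc ∑ k ∈ range M, (μ.cells.card - siz μ ((tabUC T).v (k + 1)))
      = ∑ k ∈ range M, ∑ i ∈ range (R μ),
          ((range (μ.rowLen i)).filter (fun j => k < T i j)).card := by
        exact Finset.sum_congr rfl fun k _ => hstep k
    _ = ∑ i ∈ range (R μ), ∑ k ∈ range M,
          ((range (μ.rowLen i)).filter (fun j => k < T i j)).card := Finset.sum_comm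
    _ = ∑ i ∈ range (R μ), ∑ j ∈ range (μ.rowLen i), T i j := by
        apply Finset.sum_congr rfl
        intro i _
        have hswap : ∀ k, ((range (μ.rowLen i)).filter (fun j => k < T i j)).card =
            ∑ j ∈ range (μ.rowLen i), if k < T i j then 1 else 0 := by
          intro k
          rw [Finset.card_filter]
        calc ∑ k ∈ range M, ((range (μ.rowLen i)).filter (fun j => k < T i j)).card
            = ∑ k ∈ range M, ∑ j ∈ range (μ.rowLen i), if k < T i j then 1 else 0 :=
              Finset.sum_congr rfl fun k _ => hswap k
          _ = ∑ j ∈ range (μ.rowLen i), ∑ k ∈ range M, if k < T i j then 1 else 0 :=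
              Finset.sum_comm
          _ = ∑ j ∈ range (μ.rowLen i), T i j := by
              apply Finset.sum_congr rfl
              intro j hj
              simp only [Finset.mem_range] at hj
              rw [← Finset.card_filter]
              rw [filter_lt_card]
              have hmem : (i, j) ∈ μ.cells :=
                (YoungDiagram.mem_cells _).2 (YoungDiagram.mem_iff_lt_rowLen.2 hj)
              have := Finset.le_sup (f := fun c : ℕ × ℕ => T c.1 c.2) hmem
              simp only at this
              omega
    _ = wSSYT T := (sum_cells (fun i j => T i j)).symm


/-! ### Plane partitions with fixed diagonal and pairs of descending chains -/

lemma pp_ext {π π' : PlanePartition} (h : π.part = π'.part) : π = π' := by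
  cases π; cases π'; cases h; rfl

lemma pp_bound (π : PlanePartition) : ∃ M, ∀ i j, (M ≤ i ∨ M ≤ j) → π.part i j = 0 := by
  classical
  refine ⟨(π.support_finite.toFinset.sup fun p => p.1 ⊔ p.2) + 1, ?_⟩
  intro i j hij
  by_contra h0
  have hmem : ((i, j) : ℕ × ℕ) ∈ π.support_finite.toFinset := by
    rw [Set.Finite.mem_toFinset]
    exact h0
  have h1 := Finset.le_sup (f := fun p : ℕ × ℕ => p.1 ⊔ p.2) hmem
  have hi : i ≤ π.support_finite.toFinset.sup fun p => p.1 ⊔ p.2 :=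
    le_trans le_sup_left h1
  have hj : j ≤ π.support_finite.toFinset.sup fun p => p.1 ⊔ p.2 :=
    le_trans le_sup_right h1
  omega

/-- upper diagonal slices -/
def toDC1 (π : PlanePartition) (h : ∀ i, π.part i i = μ.rowLen i) : DC μ where
  u := fun k i => π.part i (i + k)
  zero := fun i => h i
  hs := fun k => ⟨fun i => π.col_antitone i (i + k), fun i => by
    show π.part (i + 1) (i + 1 + k) ≤ π.part i (i + (k + 1))
    rw [show i + 1 + k = i + k + 1 from by omega, show i + (k + 1) = i + k + 1 from by omega]
    exact π.row_antitone i (i + k + 1)⟩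
  fin := by
    obtain ⟨M, hM⟩ := pp_bound π
    exact ⟨M, fun i => hM i (i + M) (Or.inr (by omega))⟩

/-- lower diagonal slices -/
def toDC2 (π : PlanePartition) (h : ∀ i, π.part i i = μ.rowLen i) : DC μ where
  u := fun k j => π.part (j + k) j
  zero := fun j => h j
  hs := fun k => ⟨fun j => π.row_antitone (j + k) j, fun j => by
    show π.part (j + 1 + k) (j + 1) ≤ π.part (j + (k + 1)) j
    rw [show j + 1 + k = j + k + 1 from by omega, show j + (k + 1) = j + k + 1 from by omega]
    exact π.col_antitone (j + k + 1) j⟩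
  fin := by
    obtain ⟨M, hM⟩ := pp_bound π
    exact ⟨M, fun j => hM (j + M) j (Or.inl (by omega))⟩

lemma ofDC_bound (d1 d2 : DC μ) {N1 N2 : ℕ} (h1 : ∀ i, d1.u N1 i = 0) (h2 : ∀ i, d2.u N2 i = 0)
    {i j : ℕ} (h : (if i ≤ j then d1.u (j - i) i else d2.u (i - j) j) ≠ 0) :
    i < R μ + N1 + N2 + 2 ∧ j < R μ + N1 + N2 + 2 := by
  split at h
  · have hiR : i < R μ := by
      by_contra hc
      exact h (le_antisymm (le_trans (d1.le_rl _ i) (le_of_eq (rowLen_eq_zero (by omega))))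
        (Nat.zero_le _))
    have hk : j - i < N1 := by
      by_contra hc
      exact h (d1.zero_of h1 (by omega) i)
    omega
  · have hjR : j < R μ := by
      by_contra hc
      exact h (le_antisymm (le_trans (d2.le_rl _ j) (le_of_eq (rowLen_eq_zero (by omega))))
        (Nat.zero_le _))
    have hk : i - j < N2 := by
      by_contra hc
      exact h (d2.zero_of h2 (by omega) j)
    omega

/-- glue two descending chains into a plane partition -/
def ofDC (d1 d2 : DC μ) : PlanePartition where
  part := fun i j => if i ≤ j then d1.u (j - i) i else d2.u (i - j) j
  row_antitone := by
    intro i j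
    show (if i + 1 ≤ j then d1.u (j - (i + 1)) (i + 1) else d2.u (i + 1 - j) j) ≤
      (if i ≤ j then d1.u (j - i) i else d2.u (i - j) j)
    by_cases h1 : i + 1 ≤ j
    · rw [if_pos h1, if_pos (by omega)]
      have hstep := (d1.hs (j - i - 1)).2 i
      rw [show j - (i + 1) = j - i - 1 from by omega]
      rw [show j - i = (j - i - 1) + 1 from by omega]
      exact hstep
    · rw [if_neg h1]
      by_cases h2 : i ≤ j
      · have hij : i = j := by omega
        subst hij
        rw [if_pos le_rfl, show i + 1 - i = 1 from by omega, show i - i = 0 from by omega]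
        calc d2.u 1 i ≤ d2.u 0 i := (d2.hs 0).1 i
          _ = μ.rowLen i := d2.zero i
          _ = d1.u 0 i := (d1.zero i).symm
      · rw [if_neg (by omega)]
        have hstep := (d2.hs (i - j)).1 j
        rw [show i + 1 - j = (i - j) + 1 from by omega]
        exact hstep
  col_antitone := by
    intro i j
    show (if i ≤ j + 1 then d1.u (j + 1 - i) i else d2.u (i - (j + 1)) (j + 1)) ≤
      (if i ≤ j then d1.u (j - i) i else d2.u (i - j) j)
    by_cases h1 : i ≤ j
    · rw [if_pos (by omega), if_pos h1, show j + 1 - i = (j - i) + 1 from by omega]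
      exact (d1.hs (j - i)).1 i
    · by_cases h2 : i ≤ j + 1
      · have hij : i = j + 1 := by omega
        subst hij
        rw [if_pos le_rfl, if_neg (by omega), show j + 1 - (j + 1) = 0 from by omega,
          show j + 1 - j = 1 from by omega]
        have h3 := (d2.hs 0).2 j
        rw [d2.zero (j + 1)] at h3
        rw [d1.zero (j + 1)]
        exact h3
      · rw [if_neg (by omega), if_neg (by omega), show i - j = (i - (j + 1)) + 1 from by omega]
        exact (d2.hs (i - (j + 1))).2 j
  support_finite := by
    obtain ⟨N1, h1⟩ := d1.fin
    obtain ⟨N2, h2⟩ := d2.fin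
    apply Set.Finite.subset
      (Finset.finite_toSet (range (R μ + N1 + N2 + 2) ×ˢ range (R μ + N1 + N2 + 2)))
    rintro ⟨i, j⟩ hmem
    simp only [Function.mem_support] at hmem
    have := ofDC_bound d1 d2 h1 h2 hmem
    simp only [Finset.coe_product, Set.mem_prod, Finset.mem_coe, Finset.mem_range]
    exact ⟨this.1, this.2⟩

lemma ofDC_diag (d1 d2 : DC μ) : ∀ i, (ofDC d1 d2).part i i = μ.rowLen i := by
  intro i
  show (if i ≤ i then d1.u (i - i) i else d2.u (i - i) i) = μ.rowLen i
  rw [if_pos le_rfl, show i - i = 0 from by omega, d1.zero i]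

/-- Plane partitions with fixed diagonal μ are pairs of descending chains. -/
noncomputable def E1 (μ : YoungDiagram) :
    {π : PlanePartition // ∀ i : ℕ, π.part i i = μ.rowLen i} ≃ DC μ × DC μ where
  toFun := fun p => (toDC1 p.1 p.2, toDC2 p.1 p.2)
  invFun := fun p => ⟨ofDC p.1 p.2, ofDC_diag p.1 p.2⟩
  left_inv := by
    rintro ⟨π, h⟩
    apply Subtype.ext
    apply pp_ext
    funext i j
    show (if i ≤ j then π.part i (i + (j - i)) else π.part (j + (i - j)) j) = π.part i j
    by_cases hij : i ≤ j
    · rw [if_pos hij, show i + (j - i) = j from by omega]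
    · rw [if_neg hij, show j + (i - j) = i from by omega]
  right_inv := by
    rintro ⟨d1, d2⟩
    have hz : ∀ i : ℕ, d1.u 0 i = d2.u 0 i := fun i => (d1.zero i).trans (d2.zero i).symm
    refine Prod.ext ?_ ?_
    · apply DC.ext
      funext k i
      show (if i ≤ i + k then d1.u (i + k - i) i else d2.u (i - (i + k)) (i + k)) = d1.u k i
      rw [if_pos (by omega), show i + k - i = k from by omega]
    · apply DC.ext
      funext k j
      show (if j + k ≤ j then d1.u (j - (j + k)) (j + k) else d2.u (j + k - j) j) = d2.u k j
      rcases Nat.eq_zero_or_pos k with rfl | hk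
      · rw [if_pos (by omega)]
        simpa using hz j
      · rw [if_neg (by omega), show j + k - j = k from by omega]


lemma sum_square_siz (d : DC μ) {M : ℕ} (hM : R μ ≤ M) (k : ℕ) :
    ∑ i ∈ range M, d.u k i = siz μ (d.u k) := by
  rw [siz]
  symm
  apply Finset.sum_subset (Finset.range_subset_range.2 hM)
  intro i _ hi
  simp only [Finset.mem_range, not_lt] at hi
  exact le_antisymm (le_trans (d.le_rl k i) (le_of_eq (rowLen_eq_zero hi))) (Nat.zero_le _)

lemma size_ofDC (d1 d2 : DC μ) : (ofDC d1 d2).size = μ.cells.card + d1.w + d2.w := by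
  set N1 := d1.fin.choose with hN1
  set N2 := d2.fin.choose with hN2
  have h1 := d1.fin.choose_spec
  have h2 := d2.fin.choose_spec
  set M := R μ + N1 + N2 + 2 with hMdef
  set P := range M ×ˢ range M with hP
  -- step 0 : size as a finite sum over a big square
  have step0 : (ofDC d1 d2).size = ∑ p ∈ P, (ofDC d1 d2).part p.1 p.2 := by
    apply finsum_eq_sum_of_support_subset
    rintro ⟨i, j⟩ hsupp
    simp only [Function.mem_support] at hsupp
    have hb := ofDC_bound d1 d2 h1 h2 hsupp
    simp only [hP, Finset.coe_product, Set.mem_prod, Finset.mem_coe, Finset.mem_range]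
    exact ⟨hb.1, hb.2⟩
  rw [step0, ← Finset.sum_filter_add_sum_filter_not P (fun p => p.1 ≤ p.2)]
  -- upper part
  have upper : ∑ p ∈ P.filter (fun p => p.1 ≤ p.2), (ofDC d1 d2).part p.1 p.2
      = μ.cells.card + d1.w := by
    have hbij : ∑ p ∈ P.filter (fun p => p.1 ≤ p.2), (ofDC d1 d2).part p.1 p.2
        = ∑ q ∈ P.filter (fun q => q.2 + q.1 < M), d1.u q.1 q.2 := by
      apply Finset.sum_nbij' (fun p => (p.2 - p.1, p.1)) (fun q => (q.2, q.2 + q.1))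
      · rintro ⟨a, b⟩ hab
        simp only [hP, Finset.mem_filter, Finset.mem_product, Finset.mem_range] at hab ⊢
        omega
      · rintro ⟨k, i⟩ hki
        simp only [hP, Finset.mem_filter, Finset.mem_product, Finset.mem_range] at hki ⊢
        omega
      · rintro ⟨a, b⟩ hab
        simp only [hP, Finset.mem_filter, Finset.mem_product, Finset.mem_range] at hab
        simp [Prod.mk.injEq]
        try omega
      · rintro ⟨k, i⟩ hki
        simp only [hP, Finset.mem_filter, Finset.mem_product, Finset.mem_range] at hki
        simp [Prod.mk.injEq]
        try omega
      · rintro ⟨a, b⟩ hab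
        simp only [hP, Finset.mem_filter, Finset.mem_product, Finset.mem_range] at hab
        show (if a ≤ b then d1.u (b - a) a else d2.u (a - b) b) = d1.u (b - a) a
        rw [if_pos hab.2]
    rw [hbij]
    have hext : ∑ q ∈ P.filter (fun q => q.2 + q.1 < M), d1.u q.1 q.2
        = ∑ q ∈ P, d1.u q.1 q.2 := by
      apply Finset.sum_subset (Finset.filter_subset _ _)
      rintro ⟨k, i⟩ hP0 hnot
      simp only [hP, Finset.mem_filter, Finset.mem_product, Finset.mem_range] at hP0 hnot
      rcases lt_or_ge i (R μ) with hiR | hiR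
      · have hk : N1 ≤ k := by omega
        exact d1.zero_of h1 hk i
      · exact le_antisymm (le_trans (d1.le_rl k i) (le_of_eq (rowLen_eq_zero hiR)))
          (Nat.zero_le _)
    rw [hext, hP, Finset.sum_product]
    have hin : ∀ k, ∑ i ∈ range M, d1.u k i = siz μ (d1.u k) :=
      fun k => sum_square_siz d1 (by omega) k
    rw [Finset.sum_congr rfl (fun k _ => hin k)]
    rw [show M = (M - 1) + 1 from by omega, Finset.sum_range_succ']
    have hz : siz μ (d1.u 0) = μ.cells.card := by
      have he : d1.u 0 = fun i => μ.rowLen i := funext d1.zero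
      rw [he, siz_rl]
    rw [hz, d1.w_eq (M := M - 1) (by omega)]
    omega
  -- lower part
  have lower : ∑ p ∈ P.filter (fun p => ¬ p.1 ≤ p.2), (ofDC d1 d2).part p.1 p.2 = d2.w := by
    have hbij : ∑ p ∈ P.filter (fun p => ¬ p.1 ≤ p.2), (ofDC d1 d2).part p.1 p.2
        = ∑ q ∈ P.filter (fun q => q.2 + q.1 + 1 < M), d2.u (q.1 + 1) q.2 := by
      apply Finset.sum_nbij' (fun p => (p.1 - p.2 - 1, p.2)) (fun q => (q.2 + q.1 + 1, q.2))
      · rintro ⟨a, b⟩ hab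
        simp only [hP, Finset.mem_filter, Finset.mem_product, Finset.mem_range] at hab ⊢
        omega
      · rintro ⟨k, j⟩ hkj
        simp only [hP, Finset.mem_filter, Finset.mem_product, Finset.mem_range] at hkj ⊢
        omega
      · rintro ⟨a, b⟩ hab
        simp only [hP, Finset.mem_filter, Finset.mem_product, Finset.mem_range] at hab
        simp [Prod.mk.injEq]
        try omega
      · rintro ⟨k, j⟩ hkj
        simp only [hP, Finset.mem_filter, Finset.mem_product, Finset.mem_range] at hkj
        simp [Prod.mk.injEq]
        try omega
      · rintro ⟨a, b⟩ hab
        simp only [hP, Finset.mem_filter, Finset.mem_product, Finset.mem_range] at hab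
        show (if a ≤ b then d1.u (b - a) a else d2.u (a - b) b) = d2.u (a - b - 1 + 1) b
        rw [if_neg (by omega), show a - b - 1 + 1 = a - b from by omega]
    rw [hbij]
    have hext : ∑ q ∈ P.filter (fun q => q.2 + q.1 + 1 < M), d2.u (q.1 + 1) q.2
        = ∑ q ∈ P, d2.u (q.1 + 1) q.2 := by
      apply Finset.sum_subset (Finset.filter_subset _ _)
      rintro ⟨k, j⟩ hP0 hnot
      simp only [hP, Finset.mem_filter, Finset.mem_product, Finset.mem_range] at hP0 hnot
      rcases lt_or_ge j (R μ) with hjR | hjR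
      · have hk : N2 ≤ k + 1 := by omega
        exact d2.zero_of h2 hk j
      · exact le_antisymm (le_trans (d2.le_rl (k + 1) j) (le_of_eq (rowLen_eq_zero hjR)))
          (Nat.zero_le _)
    rw [hext, hP, Finset.sum_product]
    have hin : ∀ k, ∑ j ∈ range M, d2.u (k + 1) j = siz μ (d2.u (k + 1)) :=
      fun k => sum_square_siz d2 (by omega) (k + 1)
    rw [Finset.sum_congr rfl (fun k _ => hin k)]
    rw [d2.w_eq (M := M) (by omega)]
  rw [upper, lower]


/-! ### The Bender–Knuth style involution on ascending chains -/

section Star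

variable {κ lam ν : ℕ → ℕ}

/-- the complement of ν inside the box of partitions fitting between κ and lam -/
def star (κ lam ν : ℕ → ℕ) : ℕ → ℕ := fun i =>
  max (κ i) (lam (i + 1)) + (if i = 0 then lam 0 else min (lam i) (κ (i - 1))) - ν i

lemma star_a_le (h1 : HS κ ν) (h2 : HS ν lam) (i : ℕ) : max (κ i) (lam (i + 1)) ≤ ν i :=
  max_le (h1.1 i) (h2.2 i)

lemma star_le_b (h1 : HS κ ν) (h2 : HS ν lam) (i : ℕ) :
    ν i ≤ (if i = 0 then lam 0 else min (lam i) (κ (i - 1))) := by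
  rcases Nat.eq_zero_or_pos i with rfl | hi
  · rw [if_pos rfl]
    exact h2.1 0
  · rw [if_neg (by omega)]
    refine le_min (h2.1 i) ?_
    have := h1.2 (i - 1)
    rwa [show i - 1 + 1 = i from by omega] at this

lemma star_spec (h1 : HS κ ν) (h2 : HS ν lam) (i : ℕ) :
    star κ lam ν i + ν i =
      max (κ i) (lam (i + 1)) + (if i = 0 then lam 0 else min (lam i) (κ (i - 1))) := by
  have ha := star_a_le h1 h2 i
  have hb := star_le_b h1 h2 i
  rw [star]
  omega

lemma star_hs_left (h1 : HS κ ν) (h2 : HS ν lam) : HS κ (star κ lam ν) := by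
  constructor
  · intro i
    have hs := star_spec h1 h2 i
    have hb := star_le_b h1 h2 i
    have hA : κ i ≤ max (κ i) (lam (i + 1)) := le_max_left _ _
    omega
  · intro i
    have hs := star_spec h1 h2 (i + 1)
    have ha := star_a_le h1 h2 (i + 1)
    have hB : (if i + 1 = 0 then lam 0 else min (lam (i + 1)) (κ (i + 1 - 1))) ≤ κ i := by
      rw [if_neg (by omega), show i + 1 - 1 = i from by omega]
      exact min_le_right _ _
    omega

lemma star_hs_right (h1 : HS κ ν) (h2 : HS ν lam) : HS (star κ lam ν) lam := by
  constructor
  · intro i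
    have hs := star_spec h1 h2 i
    have ha := star_a_le h1 h2 i
    have hB : (if i = 0 then lam 0 else min (lam i) (κ (i - 1))) ≤ lam i := by
      rcases Nat.eq_zero_or_pos i with rfl | hi
      · rw [if_pos rfl]
      · rw [if_neg (by omega)]
        exact min_le_left _ _
    omega
  · intro i
    have hs := star_spec h1 h2 i
    have hb := star_le_b h1 h2 i
    have hA : lam (i + 1) ≤ max (κ i) (lam (i + 1)) := le_max_right _ _
    omega

lemma star_star (h1 : HS κ ν) (h2 : HS ν lam) : star κ lam (star κ lam ν) = ν := by
  funext i
  have hs1 := star_spec h1 h2 i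
  have hs2 := star_spec (star_hs_left h1 h2) (star_hs_right h1 h2) i
  omega

lemma siz_star (hrl : ∀ i, lam i ≤ μ.rowLen i) (h1 : HS κ ν) (h2 : HS ν lam) :
    siz μ (star κ lam ν) + siz μ ν = siz μ κ + siz μ lam := by
  rcases Nat.eq_zero_or_pos (R μ) with hR | hR
  · simp only [siz, hR, Finset.range_zero, Finset.sum_empty]
  obtain ⟨r, hrR⟩ : ∃ r, R μ = r + 1 := ⟨R μ - 1, by omega⟩
  have hpt : ∑ i ∈ range (r + 1), (star κ lam ν i + ν i) =
      ∑ i ∈ range (r + 1), (max (κ i) (lam (i + 1)) +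
        (if i = 0 then lam 0 else min (lam i) (κ (i - 1)))) :=
    Finset.sum_congr rfl fun i _ => star_spec h1 h2 i
  have hsplit : ∑ i ∈ range (r + 1), (max (κ i) (lam (i + 1)) +
      (if i = 0 then lam 0 else min (lam i) (κ (i - 1)))) =
      (∑ i ∈ range (r + 1), max (κ i) (lam (i + 1))) +
      (∑ i ∈ range (r + 1), (if i = 0 then lam 0 else min (lam i) (κ (i - 1)))) :=
    Finset.sum_add_distrib
  have hb : ∑ i ∈ range (r + 1), (if i = 0 then lam 0 else min (lam i) (κ (i - 1))) =
      (∑ i ∈ range r, min (lam (i + 1)) (κ i)) + lam 0 := by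
    rw [Finset.sum_range_succ']
    have hcg : ∀ i ∈ range r,
        (if i + 1 = 0 then lam 0 else min (lam (i + 1)) (κ (i + 1 - 1))) =
          min (lam (i + 1)) (κ i) := by
      intro i _
      rw [if_neg (by omega), show i + 1 - 1 = i from by omega]
    rw [Finset.sum_congr rfl hcg, if_pos rfl]
  have ha : ∑ i ∈ range (r + 1), max (κ i) (lam (i + 1)) =
      (∑ i ∈ range r, max (κ i) (lam (i + 1))) + κ r := by
    rw [Finset.sum_range_succ]
    congr 1
    have hlam : lam (r + 1) = 0 := by
      have hx := hrl (r + 1)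
      have hy := rowLen_eq_zero (μ := μ) (i := r + 1) (by omega)
      omega
    rw [hlam]
    omega
  have hcomb : (∑ i ∈ range r, max (κ i) (lam (i + 1))) +
      (∑ i ∈ range r, min (lam (i + 1)) (κ i)) =
      (∑ i ∈ range r, κ i) + (∑ i ∈ range r, lam (i + 1)) := by
    rw [← Finset.sum_add_distrib, ← Finset.sum_add_distrib]
    apply Finset.sum_congr rfl
    intro i _
    rw [min_comm, max_add_min]
  have hk : (∑ i ∈ range r, κ i) + κ r = siz μ κ := by
    rw [siz, hrR, Finset.sum_range_succ]
  have hl : lam 0 + (∑ i ∈ range r, lam (i + 1)) = siz μ lam := by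
    rw [siz, hrR, Finset.sum_range_succ']
    omega
  have hfin : siz μ (star κ lam ν) + siz μ ν =
      ∑ i ∈ range (r + 1), (star κ lam ν i + ν i) := by
    rw [siz, siz, hrR, ← Finset.sum_add_distrib]
  omega

end Star

/-- the entries of the Bender–Knuth involution at position k -/
def bkv (c : UC μ) (k : ℕ) : ℕ → ℕ → ℕ := fun m =>
  if m = k + 1 then star (c.v k) (c.v (k + 2)) (c.v (k + 1)) else c.v m

lemma bkv_ne (c : UC μ) (k : ℕ) {m : ℕ} (hm : m ≠ k + 1) : bkv c k m = c.v m := if_neg hm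

lemma bkv_eq (c : UC μ) (k : ℕ) :
    bkv c k (k + 1) = star (c.v k) (c.v (k + 2)) (c.v (k + 1)) := if_pos rfl

/-- the Bender–Knuth involution at position k -/
def bk (c : UC μ) (k : ℕ) : UC μ where
  v := bkv c k
  zero := by
    intro i
    rw [bkv_ne c k (by omega)]
    exact c.zero i
  hs := by
    intro m
    by_cases hm : m = k
    · subst hm
      rw [bkv_ne c m (by omega), bkv_eq c m]
      exact star_hs_left (c.hs m) (c.hs (m + 1))
    · by_cases hm2 : m = k + 1
      · subst hm2
        rw [bkv_eq c k, bkv_ne c k (by omega)]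
        rw [show k + 1 + 1 = k + 2 from rfl]
        exact star_hs_right (c.hs k) (c.hs (k + 1))
      · rw [bkv_ne c k hm2, bkv_ne c k (by omega)]
        exact c.hs m
  le := by
    intro m i
    by_cases hm : m = k + 1
    · subst hm
      rw [bkv_eq c k]
      exact le_trans ((star_hs_right (c.hs k) (c.hs (k + 1))).1 i) (c.le (k + 2) i)
    · rw [bkv_ne c k hm]
      exact c.le m i
  top := by
    refine ⟨c.top.choose ⊔ (k + 2), fun i => ?_⟩
    rw [bkv_ne c k (by omega)]
    exact c.rl_of c.top.choose_spec le_sup_left i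

/-- the value-swapping function -/
def sswap (k : ℕ) : ℕ → ℕ := fun m => if m = k then k + 1 else if m = k + 1 then k else m

lemma sswap_left (k : ℕ) : sswap k k = k + 1 := if_pos rfl

lemma sswap_right (k : ℕ) : sswap k (k + 1) = k := by
  unfold sswap
  rw [if_neg (by omega), if_pos rfl]

lemma sswap_other (k : ℕ) {m : ℕ} (h1 : m ≠ k) (h2 : m ≠ k + 1) : sswap k m = m := by
  unfold sswap
  rw [if_neg h1, if_neg h2]

lemma sswap_invol (k : ℕ) : sswap k ∘ sswap k = id := by
  funext m
  simp only [Function.comp_apply, sswap, id]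
  split_ifs <;> omega

lemma UC.cont_apply (c : UC μ) (k : ℕ) : c.cont k = siz μ (c.v (k + 1)) - siz μ (c.v k) := rfl

lemma bk_v (c : UC μ) (k : ℕ) : (bk c k).v = bkv c k := rfl

lemma bk_cont (c : UC μ) (k : ℕ) : (bk c k).cont = c.cont ∘ sswap k := by
  have hsiz : siz μ (star (c.v k) (c.v (k + 2)) (c.v (k + 1))) + siz μ (c.v (k + 1)) =
      siz μ (c.v k) + siz μ (c.v (k + 2)) :=
    siz_star (c.le (k + 2)) (c.hs k) (c.hs (k + 1))
  have hm1 : siz μ (c.v k) ≤ siz μ (c.v (k + 1)) := siz_mono (c.hs k).1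
  have hm2 : siz μ (c.v (k + 1)) ≤ siz μ (c.v (k + 2)) := siz_mono (c.hs (k + 1)).1
  have hm3 : siz μ (c.v k) ≤ siz μ (star (c.v k) (c.v (k + 2)) (c.v (k + 1))) :=
    siz_mono (star_hs_left (c.hs k) (c.hs (k + 1))).1
  funext m
  rw [Function.comp_apply, UC.cont_apply, UC.cont_apply]
  show siz μ (bkv c k (m + 1)) - siz μ (bkv c k m) = _
  by_cases hm : m = k
  · subst hm
    rw [bkv_eq c m, bkv_ne c m (by omega), sswap_left, show m + 1 + 1 = m + 2 from rfl]
    omega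
  · by_cases hm2 : m = k + 1
    · subst hm2
      rw [bkv_ne c k (by omega), bkv_eq c k, sswap_right, show k + 1 + 1 = k + 2 from rfl]
      omega
    · rw [bkv_ne c k (by omega), bkv_ne c k hm2, sswap_other k hm hm2]

lemma bk_invol (c : UC μ) (k : ℕ) : bk (bk c k) k = c := by
  apply UC.ext
  funext m
  show bkv (bk c k) k m = c.v m
  by_cases hm : m = k + 1
  · subst hm
    rw [bkv_eq (bk c k) k]
    show star (bkv c k k) (bkv c k (k + 2)) (bkv c k (k + 1)) = c.v (k + 1)
    rw [bkv_ne c k (by omega), bkv_ne c k (by omega), bkv_eq c k]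
    exact star_star (c.hs k) (c.hs (k + 1))
  · rw [bkv_ne (bk c k) k hm]
    show bkv c k m = c.v m
    rw [bkv_ne c k hm]


/-! ### Sorting the contents -/

def gam (N : ℕ) : ℕ → ℕ := fun x => if x < N then x + 1 else if x = N then 0 else x

def rev (N : ℕ) : ℕ → ℕ := fun x => if x < N then N - 1 - x else x

lemma gam_zero : gam 0 = id := by
  funext x
  simp only [gam, id]
  split_ifs <;> omega

lemma rev_zero : rev 0 = id := by
  funext x
  simp only [rev, id]
  split_ifs <;> omega

lemma gam_succ (N : ℕ) : gam (N + 1) = gam N ∘ sswap N := by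
  funext x
  simp only [gam, sswap, Function.comp_apply]
  split_ifs <;> omega

lemma rev_succ (N : ℕ) : rev (N + 1) = gam N ∘ rev N := by
  funext x
  simp only [gam, rev, Function.comp_apply]
  split_ifs <;> omega

def UpFiber (μ : YoungDiagram) (α : ℕ → ℕ) := {c : UC μ // c.cont = α}

def DownFiber (μ : YoungDiagram) (α : ℕ → ℕ) := {d : DC μ // d.cont = α}

lemma bk_fiber (k : ℕ) (α : ℕ → ℕ) : Nonempty (UpFiber μ (α ∘ sswap k) ≃ UpFiber μ α) := by
  have hto : ∀ c : UpFiber μ (α ∘ sswap k), (bk c.1 k).cont = α := by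
    intro c
    rw [bk_cont, c.2, Function.comp_assoc, sswap_invol, Function.comp_id]
  have hinv : ∀ c : UpFiber μ α, (bk c.1 k).cont = α ∘ sswap k := by
    intro c
    rw [bk_cont, c.2]
  exact ⟨{
    toFun := fun c => ⟨bk c.1 k, hto c⟩
    invFun := fun c => ⟨bk c.1 k, hinv c⟩
    left_inv := fun c => Subtype.ext (bk_invol c.1 k)
    right_inv := fun c => Subtype.ext (bk_invol c.1 k) }⟩

lemma gam_fiber : ∀ (N : ℕ) (α : ℕ → ℕ), Nonempty (UpFiber μ (α ∘ gam N) ≃ UpFiber μ α)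
  | 0, α => by
    rw [gam_zero, Function.comp_id]
    exact ⟨Equiv.refl _⟩
  | (N + 1), α => by
    have h1 : α ∘ gam (N + 1) = (α ∘ gam N) ∘ sswap N := by rw [gam_succ]; rfl
    obtain ⟨e1⟩ := bk_fiber (μ := μ) N (α ∘ gam N)
    obtain ⟨e2⟩ := gam_fiber N α
    rw [h1]
    exact ⟨e1.trans e2⟩

lemma rev_fiber : ∀ (N : ℕ) (α : ℕ → ℕ), Nonempty (UpFiber μ (α ∘ rev N) ≃ UpFiber μ α)
  | 0, α => by
    rw [rev_zero, Function.comp_id]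
    exact ⟨Equiv.refl _⟩
  | (N + 1), α => by
    have h1 : α ∘ rev (N + 1) = (α ∘ gam N) ∘ rev N := by rw [rev_succ]; rfl
    obtain ⟨e1⟩ := rev_fiber N (α ∘ gam N)
    obtain ⟨e2⟩ := gam_fiber (μ := μ) N α
    rw [h1]
    exact ⟨e1.trans e2⟩

/-! ### Reversal: descending chains to ascending chains -/

lemma DC.cont_apply (d : DC μ) (k : ℕ) : d.cont k = siz μ (d.u k) - siz μ (d.u (k + 1)) := rfl

lemma DC.siz_telescope (d : DC μ) : ∀ k, siz μ (d.u k) + ∑ j ∈ range k, d.cont j = μ.cells.card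
  | 0 => by
    rw [Finset.sum_range_zero, show d.u 0 = (fun i => μ.rowLen i) from funext d.zero, siz_rl,
      add_zero]
  | (k + 1) => by
    have ih := DC.siz_telescope d k
    rw [Finset.sum_range_succ]
    have hmono : siz μ (d.u (k + 1)) ≤ siz μ (d.u k) := siz_mono (d.hs k).1
    rw [DC.cont_apply d k]
    omega

lemma UC.siz_telescope (c : UC μ) : ∀ k, siz μ (c.v k) = ∑ j ∈ range k, c.cont j
  | 0 => by
    rw [Finset.sum_range_zero]
    exact Finset.sum_eq_zero fun i _ => c.zero i
  | (k + 1) => by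
    have ih := UC.siz_telescope c k
    rw [Finset.sum_range_succ, ← ih, UC.cont_apply]
    have hmono : siz μ (c.v k) ≤ siz μ (c.v (k + 1)) := siz_mono (c.hs k).1
    omega

section Reversal

variable {α : ℕ → ℕ} {N : ℕ}

lemma down_uN (d : DC μ) (hd : d.cont = α) (hN : ∀ k, N ≤ k → α k = 0) :
    ∀ i, d.u N i = 0 := by
  have h1 := d.siz_telescope (N ⊔ d.fin.choose)
  have h2 := d.siz_telescope N
  have hzero : siz μ (d.u (N ⊔ d.fin.choose)) = 0 := d.sizes_zero le_sup_right
  have hsum : ∑ j ∈ range (N ⊔ d.fin.choose), d.cont j = ∑ j ∈ range N, d.cont j := by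
    symm
    apply Finset.sum_subset (Finset.range_subset_range.2 le_sup_left)
    intro j _ hj
    simp only [Finset.mem_range, not_lt] at hj
    rw [hd]
    exact hN j hj
  have hs0 : siz μ (d.u N) = 0 := by omega
  exact eq_zero_of_siz_eq_zero (d.le_rl N) hs0

/-- reversing a descending chain -/
def revDC (d : DC μ) (hd0 : ∀ i, d.u N i = 0) : UC μ where
  v := fun m i => if m ≤ N then d.u (N - m) i else μ.rowLen i
  zero := fun i => by
    show (if 0 ≤ N then d.u (N - 0) i else μ.rowLen i) = 0
    rw [if_pos (Nat.zero_le N), Nat.sub_zero]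
    exact hd0 i
  hs := by
    intro m
    constructor
    · intro i
      show (if m ≤ N then d.u (N - m) i else μ.rowLen i) ≤
        (if m + 1 ≤ N then d.u (N - (m + 1)) i else μ.rowLen i)
      by_cases h1 : m < N
      · rw [if_pos (by omega), if_pos (by omega)]
        have hstep := (d.hs (N - m - 1)).1 i
        rw [show N - m - 1 + 1 = N - m from by omega] at hstep
        rw [show N - (m + 1) = N - m - 1 from by omega]
        exact hstep
      · by_cases h2 : m ≤ N
        · rw [if_pos h2, if_neg (by omega)]
          exact d.le_rl _ i
        · rw [if_neg h2, if_neg (by omega)]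
    · intro i
      show (if m + 1 ≤ N then d.u (N - (m + 1)) (i + 1) else μ.rowLen (i + 1)) ≤
        (if m ≤ N then d.u (N - m) i else μ.rowLen i)
      by_cases h1 : m < N
      · rw [if_pos (by omega), if_pos (by omega)]
        have hstep := (d.hs (N - m - 1)).2 i
        rw [show N - m - 1 + 1 = N - m from by omega] at hstep
        rw [show N - (m + 1) = N - m - 1 from by omega]
        exact hstep
      · by_cases h2 : m ≤ N
        · rw [if_neg (by omega), if_pos h2, show N - m = 0 from by omega, d.zero i]
          exact μ.rowLen_anti i (i + 1) (by omega)
        · rw [if_neg (by omega), if_neg h2]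
          exact μ.rowLen_anti i (i + 1) (by omega)
  le := fun m i => by
    show (if m ≤ N then d.u (N - m) i else μ.rowLen i) ≤ μ.rowLen i
    by_cases h : m ≤ N
    · rw [if_pos h]
      exact d.le_rl _ i
    · rw [if_neg h]
  top := ⟨N, fun i => by
    show (if N ≤ N then d.u (N - N) i else μ.rowLen i) = μ.rowLen i
    rw [if_pos le_rfl, Nat.sub_self]
    exact d.zero i⟩

lemma rev_apply (N x : ℕ) : rev N x = if x < N then N - 1 - x else x := rfl

lemma revDC_cont (d : DC μ) (hd0 : ∀ i, d.u N i = 0) (hd : d.cont = α)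
    (hN : ∀ k, N ≤ k → α k = 0) : (revDC d hd0).cont = α ∘ rev N := by
  funext m
  rw [UC.cont_apply, Function.comp_apply]
  by_cases hm : m < N
  · have e1 : siz μ ((revDC d hd0).v (m + 1)) = siz μ (d.u (N - m - 1)) := by
      apply Finset.sum_congr rfl
      intro i _
      show (if m + 1 ≤ N then d.u (N - (m + 1)) i else μ.rowLen i) = d.u (N - m - 1) i
      rw [if_pos (by omega), show N - (m + 1) = N - m - 1 from by omega]
    have e2 : siz μ ((revDC d hd0).v m) = siz μ (d.u (N - m)) := by
      apply Finset.sum_congr rfl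
      intro i _
      show (if m ≤ N then d.u (N - m) i else μ.rowLen i) = d.u (N - m) i
      rw [if_pos (by omega)]
    rw [e1, e2, rev_apply, if_pos hm]
    have hc := congrFun hd (N - m - 1)
    rw [DC.cont_apply, show N - m - 1 + 1 = N - m from by omega] at hc
    rw [show N - 1 - m = N - m - 1 from by omega, ← hc]
  · have e1 : siz μ ((revDC d hd0).v (m + 1)) = μ.cells.card := by
      rw [← siz_rl]
      apply Finset.sum_congr rfl
      intro i _
      show (if m + 1 ≤ N then d.u (N - (m + 1)) i else μ.rowLen i) = μ.rowLen i
      rw [if_neg (by omega)]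
    have e2 : siz μ ((revDC d hd0).v m) = μ.cells.card := by
      rw [← siz_rl]
      apply Finset.sum_congr rfl
      intro i _
      show (if m ≤ N then d.u (N - m) i else μ.rowLen i) = μ.rowLen i
      by_cases h2 : m ≤ N
      · rw [if_pos h2, show N - m = 0 from by omega, d.zero i]
      · rw [if_neg h2]
    rw [e1, e2, rev_apply, if_neg hm, hN m (by omega)]
    omega

lemma up_vN (c : UC μ) (hc : c.cont = α ∘ rev N) (hN : ∀ k, N ≤ k → α k = 0) :
    ∀ i, c.v N i = μ.rowLen i := by
  have hK : siz μ (c.v (N ⊔ c.top.choose)) = μ.cells.card := c.sizes_card le_sup_right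
  have h1 := c.siz_telescope (N ⊔ c.top.choose)
  have h2 := c.siz_telescope N
  have hext : ∑ j ∈ range (N ⊔ c.top.choose), c.cont j = ∑ j ∈ range N, c.cont j := by
    symm
    apply Finset.sum_subset (Finset.range_subset_range.2 le_sup_left)
    intro j _ hj
    simp only [Finset.mem_range, not_lt] at hj
    rw [hc, Function.comp_apply, rev_apply, if_neg (by omega)]
    exact hN j hj
  have hcard : siz μ (c.v N) = μ.cells.card := by omega
  exact eq_rl_of_siz (c.le N) hcard

/-- reversing an ascending chain -/
def revUC (c : UC μ) (hcN : ∀ i, c.v N i = μ.rowLen i) : DC μ where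
  u := fun k i => if k ≤ N then c.v (N - k) i else 0
  zero := fun i => by
    show (if 0 ≤ N then c.v (N - 0) i else 0) = μ.rowLen i
    rw [if_pos (Nat.zero_le N), Nat.sub_zero]
    exact hcN i
  hs := by
    intro k
    constructor
    · intro i
      show (if k + 1 ≤ N then c.v (N - (k + 1)) i else 0) ≤
        (if k ≤ N then c.v (N - k) i else 0)
      by_cases h1 : k < N
      · rw [if_pos (by omega), if_pos (by omega)]
        have hstep := (c.hs (N - k - 1)).1 i
        rw [show N - k - 1 + 1 = N - k from by omega] at hstep
        rw [show N - (k + 1) = N - k - 1 from by omega]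
        exact hstep
      · rw [if_neg (by omega)]
        exact Nat.zero_le _
    · intro i
      show (if k ≤ N then c.v (N - k) (i + 1) else 0) ≤
        (if k + 1 ≤ N then c.v (N - (k + 1)) i else 0)
      by_cases h1 : k < N
      · rw [if_pos (by omega), if_pos (by omega)]
        have hstep := (c.hs (N - k - 1)).2 i
        rw [show N - k - 1 + 1 = N - k from by omega] at hstep
        rw [show N - (k + 1) = N - k - 1 from by omega]
        exact hstep
      · rw [if_neg (show ¬(k + 1 ≤ N) by omega)]
        by_cases h2 : k ≤ N
        · rw [if_pos h2, show N - k = 0 from by omega, c.zero (i + 1)]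
        · rw [if_neg h2]
  fin := ⟨N, fun i => by
    show (if N ≤ N then c.v (N - N) i else 0) = 0
    rw [if_pos le_rfl, Nat.sub_self]
    exact c.zero i⟩

lemma revUC_cont (c : UC μ) (hcN : ∀ i, c.v N i = μ.rowLen i) (hc : c.cont = α ∘ rev N)
    (hN : ∀ k, N ≤ k → α k = 0) : (revUC c hcN).cont = α := by
  funext k
  rw [DC.cont_apply]
  by_cases hk : k < N
  · have e1 : siz μ ((revUC c hcN).u k) = siz μ (c.v (N - k)) := by
      apply Finset.sum_congr rfl
      intro i _
      show (if k ≤ N then c.v (N - k) i else 0) = c.v (N - k) i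
      rw [if_pos (by omega)]
    have e2 : siz μ ((revUC c hcN).u (k + 1)) = siz μ (c.v (N - k - 1)) := by
      apply Finset.sum_congr rfl
      intro i _
      show (if k + 1 ≤ N then c.v (N - (k + 1)) i else 0) = c.v (N - k - 1) i
      rw [if_pos (by omega), show N - (k + 1) = N - k - 1 from by omega]
    rw [e1, e2]
    have hcc := congrFun hc (N - k - 1)
    rw [UC.cont_apply, show N - k - 1 + 1 = N - k from by omega, Function.comp_apply,
      rev_apply, if_pos (by omega), show N - 1 - (N - k - 1) = k from by omega] at hcc
    exact hcc
  · have e1 : siz μ ((revUC c hcN).u (k + 1)) = 0 := by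
      apply Finset.sum_eq_zero
      intro i _
      show (if k + 1 ≤ N then c.v (N - (k + 1)) i else 0) = 0
      rw [if_neg (by omega)]
    have e2 : siz μ ((revUC c hcN).u k) = 0 := by
      apply Finset.sum_eq_zero
      intro i _
      show (if k ≤ N then c.v (N - k) i else 0) = 0
      by_cases h2 : k ≤ N
      · rw [if_pos h2, show N - k = 0 from by omega]
        exact c.zero i
      · rw [if_neg h2]
    rw [e1, e2, hN k (by omega)]

/-- reversal gives an equivalence between down fibers and reversed up fibers -/
def downUpFiber (hN : ∀ k, N ≤ k → α k = 0) :
    DownFiber μ α ≃ UpFiber μ (α ∘ rev N) where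
  toFun := fun d => ⟨revDC d.1 (down_uN d.1 d.2 hN), revDC_cont d.1 _ d.2 hN⟩
  invFun := fun c => ⟨revUC c.1 (up_vN c.1 c.2 hN), revUC_cont c.1 _ c.2 hN⟩
  left_inv := by
    rintro ⟨d, hd⟩
    apply Subtype.ext
    apply DC.ext
    funext k i
    show (if k ≤ N then (revDC d (down_uN d hd hN)).v (N - k) i else 0) = d.u k i
    by_cases h : k ≤ N
    · rw [if_pos h]
      show (if N - k ≤ N then d.u (N - (N - k)) i else μ.rowLen i) = d.u k i
      rw [if_pos (by omega), show N - (N - k) = k from by omega]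
    · rw [if_neg h]
      exact (d.zero_of (down_uN d hd hN) (by omega) i).symm
  right_inv := by
    rintro ⟨c, hc⟩
    apply Subtype.ext
    apply UC.ext
    funext m i
    show (if m ≤ N then (revUC c (up_vN c hc hN)).u (N - m) i else μ.rowLen i) = c.v m i
    by_cases h : m ≤ N
    · rw [if_pos h]
      show (if N - m ≤ N then c.v (N - (N - m)) i else 0) = c.v m i
      rw [if_pos (by omega), show N - (N - m) = m from by omega]
    · rw [if_neg h]
      exact (c.rl_of (up_vN c hc hN) (by omega) i).symm

end Reversal

lemma fiber_equiv (α : ℕ → ℕ) : Nonempty (DownFiber μ α ≃ UpFiber μ α) := by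
  by_cases hfin : ∃ N, ∀ k, N ≤ k → α k = 0
  · obtain ⟨N, hN⟩ := hfin
    obtain ⟨e2⟩ := rev_fiber (μ := μ) N α
    exact ⟨(downUpFiber hN).trans e2⟩
  · have hD : IsEmpty (DownFiber μ α) := by
      constructor
      intro d
      apply hfin
      refine ⟨d.1.fin.choose, fun k hk => ?_⟩
      rw [← d.2, DC.cont_apply, d.1.sizes_zero hk, d.1.sizes_zero (by omega)]
    have hU : IsEmpty (UpFiber μ α) := by
      constructor
      intro c
      apply hfin
      refine ⟨c.1.top.choose, fun k hk => ?_⟩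
      rw [← c.2, UC.cont_apply, c.1.sizes_card hk, c.1.sizes_card (by omega)]
      omega
    exact ⟨Equiv.equivOfIsEmpty _ _⟩

/-- descending chains are equivalent to ascending chains (content preserving) -/
noncomputable def E3 (μ : YoungDiagram) : DC μ ≃ UC μ :=
  (Equiv.sigmaFiberEquiv (fun d : DC μ => d.cont)).symm.trans
    ((Equiv.sigmaCongrRight (fun α => Classical.choice (fiber_equiv (μ := μ) α))).trans
      (Equiv.sigmaFiberEquiv (fun c : UC μ => c.cont)))

lemma E3_cont (d : DC μ) : (E3 μ d).cont = d.cont :=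
  ((Classical.choice (fiber_equiv (μ := μ) d.cont)) ⟨d, rfl⟩).2

lemma E3_w (d : DC μ) : (E3 μ d).w = d.w := by
  rw [UC.w_eq_cw, E3_cont, ← DC.w_eq_cw]


open scoped NNReal ENNReal

lemma E3_symm_w (c : UC μ) : ((E3 μ).symm c).w = c.w := by
  have h := E3_w ((E3 μ).symm c)
  rw [Equiv.apply_symm_apply] at h
  exact h.symm

/-- The key ENNReal identity. -/
lemma key (μ : YoungDiagram) (p : ℝ≥0) :
    (∑' x : {π : PlanePartition // ∀ i : ℕ, π.part i i = μ.rowLen i}, (p : ℝ≥0∞) ^ x.1.size)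
      = (p : ℝ≥0∞) ^ μ.cells.card *
        (∑' T : SemistandardYoungTableau μ, (p : ℝ≥0∞) ^ wSSYT T) ^ 2 := by
  classical
  let F : DC μ ≃ SemistandardYoungTableau μ := (E3 μ).trans (E2 μ).symm
  let E : {π : PlanePartition // ∀ i : ℕ, π.part i i = μ.rowLen i} ≃
      SemistandardYoungTableau μ × SemistandardYoungTableau μ :=
    (E1 μ).trans (F.prodCongr F)
  have hw : ∀ T : SemistandardYoungTableau μ, (F.symm T).w = wSSYT T := by
    intro T
    show ((E3 μ).symm ((E2 μ) T)).w = _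
    rw [E3_symm_w]
    exact w_tabUC T
  have hsize : ∀ pr : SemistandardYoungTableau μ × SemistandardYoungTableau μ,
      (E.symm pr).1.size = μ.cells.card + wSSYT pr.1 + wSSYT pr.2 := by
    rintro ⟨T1, T2⟩
    show (ofDC (F.symm T1) (F.symm T2)).size = _
    rw [size_ofDC, hw, hw]
  rw [← Equiv.tsum_eq E.symm (fun x : {π : PlanePartition // ∀ i : ℕ, π.part i i = μ.rowLen i} =>
    (p : ℝ≥0∞) ^ x.1.size)]
  have hterm : ∀ pr : SemistandardYoungTableau μ × SemistandardYoungTableau μ,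
      (p : ℝ≥0∞) ^ (E.symm pr).1.size =
        (p : ℝ≥0∞) ^ μ.cells.card * ((p : ℝ≥0∞) ^ wSSYT pr.1 * (p : ℝ≥0∞) ^ wSSYT pr.2) := by
    intro pr
    rw [hsize pr, pow_add, pow_add, mul_assoc]
  rw [tsum_congr hterm, ENNReal.tsum_prod']
  have hinner : ∀ T1 : SemistandardYoungTableau μ,
      (∑' T2 : SemistandardYoungTableau μ, (p : ℝ≥0∞) ^ μ.cells.card *
        ((p : ℝ≥0∞) ^ wSSYT T1 * (p : ℝ≥0∞) ^ wSSYT T2)) =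
      ((p : ℝ≥0∞) ^ μ.cells.card * (p : ℝ≥0∞) ^ wSSYT T1) *
        ∑' T2 : SemistandardYoungTableau μ, (p : ℝ≥0∞) ^ wSSYT T2 := by
    intro T1
    rw [← ENNReal.tsum_mul_left]
    apply tsum_congr
    intro T2
    ring
  rw [tsum_congr hinner, ENNReal.tsum_mul_right, ENNReal.tsum_mul_left]
  ring

end PPAux

/-- The Schur function `s_μ(x₁, x₂, …)` evaluated at the (0-indexed) variables `x`,
defined combinatorially as the sum over all semistandard Young tableaux of shape `μ`
of the product of the variables indexed by the entries. -/
noncomputable def schurEval (x : ℕ → ℝ) (μ : YoungDiagram) : ℝ :=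
  ∑' T : SemistandardYoungTableau μ, ∏ c ∈ μ.cells, x (T c.1 c.2)

/-- The principal specialization `s_μ(q^{-ρ}) = s_μ(q^{1/2}, q^{3/2}, q^{5/2}, …)`,
i.e. the Schur function evaluated at `x_i = q^{i-1/2}` (so the 0-indexed variable
`x_k = q^{k+1/2}`). -/
noncomputable def schurPrincipal (q : ℝ) (μ : YoungDiagram) : ℝ :=
  schurEval (fun k => q ^ ((k : ℝ) + 1 / 2)) μ

open scoped NNReal ENNReal

lemma schur_eq {q : ℝ} (hq0 : 0 < q) (μ : YoungDiagram) :
    schurPrincipal q μ = (q ^ ((1:ℝ) / 2)) ^ μ.cells.card *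
      ∑' T : SemistandardYoungTableau μ, q ^ (PPAux.wSSYT T) := by
  simp only [schurPrincipal, schurEval]
  have hterm : ∀ T : SemistandardYoungTableau μ,
      (∏ c ∈ μ.cells, q ^ ((T c.1 c.2 : ℝ) + 1 / 2))
        = (q ^ ((1:ℝ) / 2)) ^ μ.cells.card * q ^ (PPAux.wSSYT T) := by
    intro T
    have h1 : ∀ c ∈ μ.cells, q ^ ((T c.1 c.2 : ℝ) + 1 / 2)
        = q ^ (T c.1 c.2) * q ^ ((1:ℝ) / 2) := by
      intro c _
      rw [show ((T c.1 c.2 : ℝ) + 1 / 2) = (T c.1 c.2 : ℝ) + (1:ℝ)/2 from by norm_num,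
        Real.rpow_add hq0, Real.rpow_natCast]
    rw [Finset.prod_congr rfl h1, Finset.prod_mul_distrib, Finset.prod_const,
      Finset.prod_pow_eq_pow_sum, PPAux.wSSYT, mul_comm]
  rw [tsum_congr hterm, tsum_mul_left]

/-- The generating function of plane partitions whose main diagonal partition is a
fixed partition `μ` equals `s_μ(q^{-ρ})²`, the square of the Schur function
specialized at `x_i = q^{i-1/2}`. -/
theorem planePartition_fixed_diagonal (q : ℝ) (hq : q ∈ Set.Ioo (0 : ℝ) 1)
    (μ : YoungDiagram) :
    ∑' π : {π : PlanePartition // ∀ i : ℕ, π.part i i = μ.rowLen i}, q ^ π.1.size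
      = schurPrincipal q μ ^ 2 := by
  obtain ⟨hq0, hq1⟩ := hq
  set p : ℝ≥0 := ⟨q, hq0.le⟩ with hpdef
  have hpq : (p : ℝ) = q := rfl
  set g1 : {π : PlanePartition // ∀ i : ℕ, π.part i i = μ.rowLen i} → ℝ≥0 :=
    fun x => p ^ x.1.size with hg1
  set g2 : SemistandardYoungTableau μ → ℝ≥0 := fun T => p ^ PPAux.wSSYT T with hg2
  have hA : (∑' x, ((g1 x : ℝ≥0∞)))
      = (p : ℝ≥0∞) ^ μ.cells.card * (∑' T, ((g2 T : ℝ≥0∞))) ^ 2 := by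
    have := PPAux.key μ p
    simpa [hg1, hg2, ENNReal.coe_pow] using this
  have hL : ∑' π : {π : PlanePartition // ∀ i : ℕ, π.part i i = μ.rowLen i}, q ^ π.1.size
      = ∑' x, ((g1 x : ℝ)) := by
    apply tsum_congr
    intro x
    rw [hg1, NNReal.coe_pow, hpq]
  have hR : schurPrincipal q μ = (q ^ ((1:ℝ) / 2)) ^ μ.cells.card * ∑' T, ((g2 T : ℝ)) := by
    rw [schur_eq hq0 μ]
    have h2 : ∀ T : SemistandardYoungTableau μ, q ^ (PPAux.wSSYT T) = ((g2 T : ℝ)) := by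
      intro T
      rw [hg2, NNReal.coe_pow, hpq]
    rw [tsum_congr h2]
  have hc0 : ((q ^ ((1:ℝ) / 2)) ^ μ.cells.card) ^ 2 = q ^ μ.cells.card := by
    rw [← pow_mul, mul_comm, pow_mul]
    congr 1
    rw [← Real.rpow_natCast (q ^ ((1:ℝ)/2)) 2, ← Real.rpow_mul hq0.le]
    norm_num
  by_cases hs2 : Summable g2
  · have hcoe2 : (∑' T, ((g2 T : ℝ≥0∞))) = ((∑' T, g2 T : ℝ≥0) : ℝ≥0∞) :=
      (ENNReal.coe_tsum hs2).symm
    have hAne : (∑' x, ((g1 x : ℝ≥0∞))) ≠ ⊤ := by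
      rw [hA, hcoe2]
      exact ENNReal.mul_ne_top (ENNReal.pow_ne_top ENNReal.coe_ne_top)
        (ENNReal.pow_ne_top ENNReal.coe_ne_top)
    have hs1 : Summable g1 := ENNReal.tsum_coe_ne_top_iff_summable.1 hAne
    have hcoe1 : (∑' x, ((g1 x : ℝ≥0∞))) = ((∑' x, g1 x : ℝ≥0) : ℝ≥0∞) :=
      (ENNReal.coe_tsum hs1).symm
    have hnn : (∑' x, g1 x) = p ^ μ.cells.card * (∑' T, g2 T) ^ 2 := by
      have h2 := hA
      rw [hcoe1, hcoe2] at h2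
      exact_mod_cast h2
    rw [hL, hR, ← NNReal.coe_tsum, hnn]
    push_cast
    rw [mul_pow, hc0, hpq]
  · have htop : (∑' T, ((g2 T : ℝ≥0∞))) = ⊤ := by
      by_contra h
      exact hs2 (ENNReal.tsum_coe_ne_top_iff_summable.1 h)
    have hAtop : (∑' x, ((g1 x : ℝ≥0∞))) = ⊤ := by
      rw [hA, htop]
      have hp0 : (p : ℝ≥0∞) ^ μ.cells.card ≠ 0 := by
        apply pow_ne_zero
        simp only [ne_eq, ENNReal.coe_eq_zero]
        intro h0
        rw [hpdef] at h0
        have : q = 0 := congrArg Subtype.val h0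
        linarith
      rw [ENNReal.top_pow (by omega), ENNReal.mul_top hp0]
    have hns1 : ¬ Summable g1 := fun h =>
      (ENNReal.tsum_coe_ne_top_iff_summable.2 h) hAtop
    have hns1' : ¬ Summable (fun x => (g1 x : ℝ)) := fun h => hns1 (NNReal.summable_coe.1 h)
    have hns2' : ¬ Summable (fun T => (g2 T : ℝ)) := fun h => hs2 (NNReal.summable_coe.1 h)
    rw [hL, hR, tsum_eq_zero_of_not_summable hns1', tsum_eq_zero_of_not_summable hns2']
    ring
end

section
/- Under the N-component decomposition of a neutral partition μ into charged partitions (λ^{(r)}, p_r), r = 1,...,N with ∑ p_r = 0, the size satisfies |μ| = N ∑_{r=1}^N |λ^{(r)}| + (N/2) ∑_{r=1}^N p_r² + ∑_{r=1}^N r·p_r. -/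
/-- The Maya diagram of a partition: the set `{μ_i - i + 1/2 : i ≥ 1} ⊆ ℤ + 1/2`,
realized inside `ℚ` (with the 0-indexed row lengths, `x_i = μ.rowLen i - (i+1) + 1/2`). -/
def maya (μ : YoungDiagram) : Set ℚ :=
  Set.range fun i : ℕ => (μ.rowLen i : ℚ) - i - 1 / 2

/-- The union of shifted, rescaled Maya diagrams
`⋃_{r=1}^{N} {N (x_i(λ⁽ʳ⁾) + p̃_r) : i ≥ 1}`, `p̃_r = p_r + (r - (N+1)/2)/N`,
associated to `N` charged partitions; `r : Fin N` stands for the 1-indexed label `r + 1`. -/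
def chargedMaya (N : ℕ) (lam : Fin N → YoungDiagram) (p : Fin N → ℤ) : Set ℚ :=
  ⋃ r : Fin N, Set.range fun i : ℕ =>
    (N : ℚ) * (((lam r).rowLen i : ℚ) - i - 1 / 2 + p r
      + (((r : ℚ) + 1) - ((N : ℚ) + 1) / 2) / N)

lemma myRowLen_eq_zero {ν : YoungDiagram} {i : ℕ} (hi : ν.colLen 0 ≤ i) : ν.rowLen i = 0 := by
  by_contra hne
  have h1 : (i, 0) ∈ ν := YoungDiagram.mem_iff_lt_rowLen.mpr (Nat.pos_of_ne_zero hne)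
  rw [YoungDiagram.mem_iff_lt_colLen] at h1
  omega

lemma mySum_rowLen (ν : YoungDiagram) (n : ℕ) (hn : ν.colLen 0 ≤ n) :
    ∑ i ∈ Finset.range n, ν.rowLen i = ν.card := by
  have hcells : ν.cells = (Finset.range n).biUnion ν.row := by
    ext ⟨i, j⟩
    simp only [Finset.mem_biUnion, Finset.mem_range, YoungDiagram.mem_row_iff,
      YoungDiagram.mem_cells]
    constructor
    · intro hij
      have h0 : (i, 0) ∈ ν := ν.up_left_mem le_rfl (Nat.zero_le j) hij
      rw [YoungDiagram.mem_iff_lt_colLen] at h0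
      exact ⟨i, by omega, hij, rfl⟩
    · rintro ⟨a, -, h1, rfl⟩; exact h1
  have hdisj : ∀ x ∈ Finset.range n, ∀ y ∈ Finset.range n, x ≠ y →
      Disjoint (ν.row x) (ν.row y) := by
    intro x _ y _ hxy
    rw [Finset.disjoint_left]
    intro c hc hc'
    rw [YoungDiagram.mem_row_iff] at hc hc'
    exact hxy (hc.2.symm.trans hc'.2)
  symm
  calc ν.card = ν.cells.card := rfl
    _ = ∑ i ∈ Finset.range n, (ν.row i).card := by rw [hcells, Finset.card_biUnion hdisj]
    _ = ∑ i ∈ Finset.range n, ν.rowLen i := by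
        exact Finset.sum_congr rfl fun i _ => (ν.rowLen_eq_card).symm

lemma myGauss (n : ℕ) : ∑ i ∈ Finset.range n, (i : ℚ) = n * (n - 1) / 2 := by
  induction n with
  | zero => simp
  | succ k ih => rw [Finset.sum_range_succ, ih]; push_cast; ring

lemma mySum_gq (ν : YoungDiagram) (n : ℕ) (hn : ν.colLen 0 ≤ n) :
    ∑ i ∈ Finset.range n, ((ν.rowLen i : ℚ) - i - 1/2) = (ν.card : ℚ) - (n : ℚ)^2 / 2 := by
  have h1 : ∑ i ∈ Finset.range n, (ν.rowLen i : ℚ) = (ν.card : ℚ) := by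
    exact_mod_cast congrArg (Nat.cast : ℕ → ℚ) (mySum_rowLen ν n hn)
  rw [Finset.sum_sub_distrib, Finset.sum_sub_distrib, h1, myGauss, Finset.sum_const,
    Finset.card_range, nsmul_eq_mul]
  ring

/-- Size formula for the `N`-component decomposition of a neutral partition:
`|μ| = N ∑_r |λ⁽ʳ⁾| + (N/2) ∑_r p_r² + ∑_r r p_r` (with `r` 1-indexed). -/
theorem charged_partition_size (N : ℕ) (hN : 1 ≤ N)
    (lam : Fin N → YoungDiagram) (p : Fin N → ℤ) (hp : ∑ r, p r = 0)
    (μ : YoungDiagram) (h : maya μ = chargedMaya N lam p) :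
    (μ.card : ℚ) = (N : ℚ) * ∑ r, ((lam r).card : ℚ)
      + (N : ℚ) / 2 * ∑ r, (p r : ℚ) ^ 2
      + ∑ r : Fin N, ((r : ℚ) + 1) * (p r : ℚ) := by
  classical
  have hNQ : (1 : ℚ) ≤ (N : ℚ) := by exact_mod_cast hN
  have hN0 : (N : ℚ) ≠ 0 := by linarith
  -- choice of cutoff
  set K : ℕ := μ.colLen 0 + ∑ r : Fin N, ((lam r).colLen 0 + (p r).natAbs) with hKdef
  have hKr : ∀ r : Fin N, (lam r).colLen 0 + (p r).natAbs ≤ K := by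
    intro r
    have h1 := Finset.single_le_sum
      (f := fun r : Fin N => (lam r).colLen 0 + (p r).natAbs)
      (fun _ _ => Nat.zero_le _) (Finset.mem_univ r)
    exact le_trans h1 (Nat.le_add_left _ _)
  have hKmu : μ.colLen 0 ≤ N * K := by
    have : K ≤ N * K := Nat.le_mul_of_pos_left K hN
    omega
  set m : Fin N → ℕ := fun r => ((K : ℤ) + p r).toNat with hmdef
  have hm : ∀ r, (m r : ℤ) = (K : ℤ) + p r := by
    intro r
    have := hKr r
    simp only [hmdef]
    omega
  have hmQ : ∀ r, (m r : ℚ) = (K : ℚ) + (p r : ℚ) := by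
    intro r; exact_mod_cast congrArg (Int.cast : ℤ → ℚ) (hm r)
  have hcol : ∀ r, (lam r).colLen 0 ≤ m r := by
    intro r
    have h1 := hKr r
    have h2 := hm r
    omega
  set T : ℚ := -((N : ℚ) * (K : ℚ)) + 1/2 with hTdef
  set f : Fin N → ℕ → ℚ := fun r i =>
    (N : ℚ) * (((lam r).rowLen i : ℚ) - i - 1 / 2 + p r
      + (((r : ℚ) + 1) - ((N : ℚ) + 1) / 2) / N) with hfdef
  have hfsplit : ∀ r i, f r i = (N : ℚ) * (((lam r).rowLen i : ℚ) - i - 1/2 + p r)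
      + (((r : ℚ) + 1) - ((N : ℚ) + 1) / 2) := by
    intro r i
    simp only [hfdef]
    field_simp
  have hrlt : ∀ r : Fin N, (r : ℚ) ≤ (N : ℚ) - 1 := by
    intro r
    have : (r : ℕ) + 1 ≤ N := r.2
    have : ((r : ℕ) : ℚ) + 1 ≤ (N : ℚ) := by exact_mod_cast this
    linarith
  have hrpos : ∀ r : Fin N, (0 : ℚ) ≤ (r : ℚ) := by
    intro r; positivity
  -- the two truncated finsets
  set A : Finset ℚ := (Finset.range (N * K)).image
    (fun i : ℕ => (μ.rowLen i : ℚ) - i - 1 / 2) with hAdef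
  set B : Finset ℚ := Finset.univ.biUnion
    (fun r : Fin N => (Finset.range (m r)).image (f r)) with hBdef
  -- injectivity
  have hanti : ∀ ν : YoungDiagram,
      StrictAnti (fun i : ℕ => (ν.rowLen i : ℚ) - i - 1/2) := by
    intro ν
    apply strictAnti_nat_of_succ_lt
    intro i
    have h1 : ν.rowLen (i+1) ≤ ν.rowLen i := ν.rowLen_anti i (i+1) (by omega)
    have h2 : ((ν.rowLen (i+1) : ℚ)) ≤ (ν.rowLen i : ℚ) := by exact_mod_cast h1
    push_cast
    linarith
  have hfanti : ∀ r, StrictAnti (f r) := by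
    intro r
    apply strictAnti_nat_of_succ_lt
    intro i
    rw [hfsplit, hfsplit]
    have h2 : (((lam r).rowLen (i+1) : ℚ)) ≤ ((lam r).rowLen i : ℚ) := by
      exact_mod_cast (lam r).rowLen_anti i (i+1) (by omega)
    have : ((lam r).rowLen (i+1) : ℚ) - (i+1:ℕ) - 1/2 + p r
        < ((lam r).rowLen i : ℚ) - i - 1/2 + p r := by push_cast; linarith
    have hNpos : (0:ℚ) < N := by linarith
    nlinarith [mul_lt_mul_of_pos_left this hNpos]
  -- A is the truncation of maya μ
  have hA : (↑A : Set ℚ) = maya μ ∩ Set.Ici T := by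
    ext x
    simp only [hAdef, Finset.coe_image, Set.mem_image, Finset.mem_coe, Finset.mem_range,
      maya, Set.mem_inter_iff, Set.mem_range, Set.mem_Ici, Finset.coe_range, Set.mem_Iio]
    constructor
    · rintro ⟨i, hi, rfl⟩
      refine ⟨⟨i, rfl⟩, ?_⟩
      have h1 : (0:ℚ) ≤ (μ.rowLen i : ℚ) := by positivity
      have h2 : (i : ℚ) + 1 ≤ ((N*K : ℕ) : ℚ) := by exact_mod_cast hi
      push_cast at h2
      simp only [hTdef]
      linarith
    · rintro ⟨⟨i, rfl⟩, hx⟩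
      refine ⟨i, ?_, rfl⟩
      by_contra hi
      push_neg at hi
      have h0 : μ.rowLen i = 0 := myRowLen_eq_zero (le_trans hKmu hi)
      rw [h0] at hx
      have h2 : ((N*K : ℕ) : ℚ) ≤ (i : ℚ) := by exact_mod_cast hi
      push_cast at h2
      simp only [hTdef] at hx
      push_cast at hx
      linarith
  -- B is the truncation of chargedMaya
  have hB : (↑B : Set ℚ) = chargedMaya N lam p ∩ Set.Ici T := by
    ext x
    simp only [hBdef, Finset.coe_biUnion, Finset.coe_univ, Set.mem_univ, Set.iUnion_true,
      Set.mem_iUnion, Finset.coe_image, Set.mem_image, Finset.mem_coe, Finset.mem_range,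
      chargedMaya, Set.mem_inter_iff, Set.mem_range, Set.mem_Ici]
    constructor
    · rintro ⟨r, i, hi, rfl⟩
      refine ⟨⟨r, i, rfl⟩, ?_⟩
      rw [hfsplit]
      have h1 : (0:ℚ) ≤ ((lam r).rowLen i : ℚ) := by positivity
      have h2 : (i : ℚ) + 1 ≤ (m r : ℚ) := by exact_mod_cast hi
      rw [hmQ r] at h2
      have h3 := hrpos r
      simp only [hTdef]
      nlinarith [mul_nonneg (by linarith : (0:ℚ) ≤ (N:ℚ)) h1,
        mul_nonneg (by linarith : (0:ℚ) ≤ (N:ℚ)) (by linarith : (0:ℚ) ≤ (K:ℚ) + (p r : ℚ) - 1 - (i:ℚ))]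
    · rintro ⟨⟨r, i, rfl⟩, hx⟩
      refine ⟨r, i, ?_, rfl⟩
      by_contra hi
      push_neg at hi
      have h0 : (lam r).rowLen i = 0 := myRowLen_eq_zero (le_trans (hcol r) hi)
      replace hx : T ≤ f r i := hx
      rw [hfsplit, h0] at hx
      have h2 : (m r : ℚ) ≤ (i : ℚ) := by exact_mod_cast hi
      rw [hmQ r] at h2
      have h3 := hrlt r
      simp only [hTdef] at hx
      push_cast at hx
      nlinarith [mul_nonneg (by linarith : (0:ℚ) ≤ (N:ℚ))
        (by linarith : (0:ℚ) ≤ (i:ℚ) - (K:ℚ) - (p r : ℚ))]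
  -- hence A = B
  have hAB : A = B := by
    apply Finset.coe_injective
    rw [hA, hB, h]
  -- disjointness of the pieces of B
  have hdisjB : (↑(Finset.univ : Finset (Fin N)) : Set (Fin N)).PairwiseDisjoint
      (fun r : Fin N => (Finset.range (m r)).image (f r)) := by
    intro r _ s _ hrs
    rw [Function.onFun, Finset.disjoint_left]
    rintro x hx hx'
    simp only [Finset.mem_image, Finset.mem_range] at hx hx'
    obtain ⟨i, -, hi⟩ := hx
    obtain ⟨j, -, hj⟩ := hx'
    apply hrs
    have heq : f r i = f s j := hi.trans hj.symm
    have h1 : f r i = (((N : ℤ) * (((lam r).rowLen i : ℤ) - i + p r) + ((r : ℕ) : ℤ) + 1 : ℤ) : ℚ)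
        - (N:ℚ)/2 - ((N:ℚ)+1)/2 := by
      rw [hfsplit]; push_cast; ring
    have h2 : f s j = (((N : ℤ) * (((lam s).rowLen j : ℤ) - j + p s) + ((s : ℕ) : ℤ) + 1 : ℤ) : ℚ)
        - (N:ℚ)/2 - ((N:ℚ)+1)/2 := by
      rw [hfsplit]; push_cast; ring
    rw [h1, h2] at heq
    have heqQ : (((N : ℤ) * (((lam r).rowLen i : ℤ) - i + p r) + ((r : ℕ) : ℤ) + 1 : ℤ) : ℚ)
        = (((N : ℤ) * (((lam s).rowLen j : ℤ) - j + p s) + ((s : ℕ) : ℤ) + 1 : ℤ) : ℚ) := by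
      linarith
    have heqZ : (N : ℤ) * (((lam r).rowLen i : ℤ) - i + p r) + ((r : ℕ) : ℤ) + 1
        = (N : ℤ) * (((lam s).rowLen j : ℤ) - j + p s) + ((s : ℕ) : ℤ) + 1 := by
      exact_mod_cast heqQ
    set u : ℤ := ((lam r).rowLen i : ℤ) - i + p r with hu
    set v : ℤ := ((lam s).rowLen j : ℤ) - j + p s with hv
    have hd : (N : ℤ) * (u - v) = ((s : ℕ) : ℤ) - ((r : ℕ) : ℤ) := by linarith
    have hrN : ((r : ℕ) : ℤ) < N := by exact_mod_cast r.2
    have hsN : ((s : ℕ) : ℤ) < N := by exact_mod_cast s.2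
    have hr0 : (0:ℤ) ≤ ((r : ℕ) : ℤ) := Int.ofNat_nonneg _
    have hs0 : (0:ℤ) ≤ ((s : ℕ) : ℤ) := Int.ofNat_nonneg _
    have hNZ : (1:ℤ) ≤ (N:ℤ) := by exact_mod_cast hN
    have huv : u = v := by
      rcases lt_trichotomy (u - v) 0 with hlt | heq0 | hgt
      · have h3 : u - v ≤ -1 := by omega
        have h4 : (N:ℤ) * (u - v) ≤ (N:ℤ) * (-1) :=
          mul_le_mul_of_nonneg_left h3 (by positivity)
        omega
      · omega
      · have h3 : (1:ℤ) ≤ u - v := by omega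
        have h4 : (N:ℤ) * 1 ≤ (N:ℤ) * (u - v) :=
          mul_le_mul_of_nonneg_left h3 (by positivity)
        omega
    rw [huv] at hd
    simp only [sub_self, mul_zero] at hd
    have : ((r : ℕ) : ℤ) = ((s : ℕ) : ℤ) := by omega
    exact Fin.ext (by exact_mod_cast this)
  -- sum over A
  have hsA : ∑ x ∈ A, x = (μ.card : ℚ) - ((N : ℚ) * (K : ℚ))^2 / 2 := by
    rw [hAdef, Finset.sum_image (fun i _ j _ hij => (hanti μ).injective hij)]
    rw [mySum_gq μ (N*K) hKmu]
    push_cast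
    ring
  -- sum over B
  have hsB : ∑ x ∈ B, x = ∑ r : Fin N,
      ((N : ℚ) * ((lam r).card : ℚ) - (N : ℚ) * ((K : ℚ) + (p r : ℚ))^2 / 2
        + ((K : ℚ) + (p r : ℚ)) * ((N : ℚ) * (p r : ℚ) + ((r : ℚ) + 1) - ((N : ℚ)+1)/2)) := by
    rw [hBdef, Finset.sum_biUnion hdisjB]
    apply Finset.sum_congr rfl
    intro r _
    rw [Finset.sum_image (fun i _ j _ hij => (hfanti r).injective hij)]
    have : ∀ i ∈ Finset.range (m r), f r i
        = (N : ℚ) * (((lam r).rowLen i : ℚ) - i - 1/2)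
          + ((N : ℚ) * (p r : ℚ) + ((r : ℚ) + 1) - ((N : ℚ)+1)/2) := by
      intro i _
      rw [hfsplit]
      ring
    rw [Finset.sum_congr rfl this, Finset.sum_add_distrib, ← Finset.mul_sum,
      mySum_gq (lam r) (m r) (hcol r), Finset.sum_const, Finset.card_range, nsmul_eq_mul,
      hmQ r]
    ring
  -- put it together
  have key : (μ.card : ℚ) - ((N : ℚ) * (K : ℚ))^2 / 2 = ∑ r : Fin N,
      ((N : ℚ) * ((lam r).card : ℚ) - (N : ℚ) * ((K : ℚ) + (p r : ℚ))^2 / 2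
        + ((K : ℚ) + (p r : ℚ)) * ((N : ℚ) * (p r : ℚ) + ((r : ℚ) + 1) - ((N : ℚ)+1)/2)) := by
    rw [← hsA, ← hsB, hAB]
  have expand : ∀ r ∈ (Finset.univ : Finset (Fin N)),
      (N : ℚ) * ((lam r).card : ℚ) - (N : ℚ) * ((K : ℚ) + (p r : ℚ))^2 / 2
        + ((K : ℚ) + (p r : ℚ)) * ((N : ℚ) * (p r : ℚ) + ((r : ℚ) + 1) - ((N : ℚ)+1)/2)
      = (N : ℚ) * ((lam r).card : ℚ) + ((N : ℚ)/2) * (p r : ℚ)^2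
        + ((r : ℚ) + 1) * (p r : ℚ)
        + (-(N : ℚ)/2 * (K:ℚ)^2 - (K:ℚ) * ((N:ℚ)+1)/2 + (K:ℚ))
        + (K : ℚ) * (r : ℚ)
        + (-((N:ℚ)+1)/2) * (p r : ℚ) := by
    intro r _
    ring
  rw [Finset.sum_congr rfl expand] at key
  simp only [Finset.sum_add_distrib, ← Finset.mul_sum, Finset.sum_const, Finset.card_univ,
    Fintype.card_fin, nsmul_eq_mul] at key
  have hpQ : ∑ r : Fin N, (p r : ℚ) = 0 := by exact_mod_cast hp
  have hrsum : ∑ r : Fin N, ((r : Fin N) : ℚ) = (N : ℚ) * ((N : ℚ) - 1) / 2 := by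
    rw [Fin.sum_univ_eq_sum_range (fun i : ℕ => (i : ℚ)) N]
    exact myGauss N
  rw [hpQ, hrsum] at key
  linear_combination key
end

section
/- Under the N-component decomposition of a neutral partition μ into charged partitions (λ^{(r)}, p_r) with ∑ p_r = 0, the quantity κ(μ) = 2∑_{(i,j)∈μ}(j-i) satisfies κ(μ) = N² ∑_{r=1}^N κ(λ^{(r)}) + 2N² ∑_{r=1}^N p̃_r |λ^{(r)}| + (N²/3) ∑_{r=1}^N p̃_r³, where p̃_r = p_r + (r-(N+1)/2)/N. -/
/-- `κ(μ) = 2 ∑_{(i,j) ∈ μ} (j - i)`, summed over the boxes of the Young diagram. -/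
def kappa (μ : YoungDiagram) : ℤ :=
  2 * ∑ c ∈ μ.cells, ((c.2 : ℤ) - (c.1 : ℤ))

open Finset

/-- `halfIntSqSum m = ∑_{i<m} (i + 1/2)²`, an odd polynomial with
`halfIntSqSum (y + 1) - halfIntSqSum y = (y + 1/2)²`. -/
def halfIntSqSum (y : ℚ) : ℚ := y ^ 3 / 3 - y / 12

lemma sum_range_add_half_sub_sq (m : ℕ) (t : ℚ) :
    ∑ i ∈ range m, ((i : ℚ) + 1 / 2 - t) ^ 2 = halfIntSqSum (m - t) + halfIntSqSum t := by
  induction m with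
  | zero => simp only [range_zero, sum_empty, CharP.cast_eq_zero, halfIntSqSum]; ring
  | succ m ih => rw [sum_range_succ, ih]; push_cast; simp only [halfIntSqSum]; ring

namespace YoungDiagram

lemma rowLen_eq_zero_of_colLen_le {μ : YoungDiagram} {i : ℕ} (h : μ.colLen 0 ≤ i) :
    μ.rowLen i = 0 := by
  by_contra hne
  have hmem : (i, 0) ∈ μ := mem_iff_lt_rowLen.2 (Nat.pos_of_ne_zero hne)
  exact (mem_iff_lt_colLen.1 hmem).not_ge h

lemma sum_cells_eq_sum_range_rowLen {M : Type*} [AddCommMonoid M] (μ : YoungDiagram) {n : ℕ}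
    (hn : μ.colLen 0 ≤ n) (f : ℕ × ℕ → M) :
    ∑ c ∈ μ.cells, f c = ∑ i ∈ range n, ∑ j ∈ range (μ.rowLen i), f (i, j) := by
  rw [← sum_fiberwise_of_maps_to (g := Prod.fst) (t := range n)]
  · refine sum_congr rfl fun i _ => ?_
    rw [show {c ∈ μ.cells | c.1 = i} = μ.row i from rfl, row_eq_prod, sum_product,
      sum_singleton]
  · intro c hc
    have hc' := mem_iff_lt_colLen.1 ((mem_cells c).1 hc)
    exact mem_range.2 (hc'.trans_le ((μ.colLen_anti 0 c.2 (Nat.zero_le _)).trans hn))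

lemma card_eq_sum_range_rowLen (μ : YoungDiagram) {n : ℕ} (hn : μ.colLen 0 ≤ n) :
    μ.card = ∑ i ∈ range n, μ.rowLen i := by
  rw [YoungDiagram.card, card_eq_sum_ones, μ.sum_cells_eq_sum_range_rowLen hn]
  simp

end YoungDiagram

lemma kappa_eq_sum_range_rowLen (μ : YoungDiagram) {n : ℕ} (hn : μ.colLen 0 ≤ n) :
    (kappa μ : ℚ) = ∑ i ∈ range n,
      ((μ.rowLen i : ℚ) ^ 2 - μ.rowLen i - 2 * i * μ.rowLen i) := by
  have hrow (k : ℕ) (a : ℚ) :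
      2 * ∑ j ∈ range k, ((j : ℚ) - a) = (k : ℚ) ^ 2 - k - 2 * a * k := by
    induction k with
    | zero => simp
    | succ k ih => rw [sum_range_succ, mul_add, ih]; push_cast; ring
  rw [kappa, μ.sum_cells_eq_sum_range_rowLen hn fun c => (c.2 : ℤ) - c.1]
  push_cast
  rw [mul_sum]
  exact sum_congr rfl fun i _ => hrow _ _

def mayaCoord (μ : YoungDiagram) (i : ℕ) : ℚ :=
  (μ.rowLen i : ℚ) - i - 1 / 2

lemma strictAnti_mayaCoord (μ : YoungDiagram) : StrictAnti (mayaCoord μ) := by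
  intro i j hij
  have hrow : (μ.rowLen j : ℚ) ≤ μ.rowLen i := by exact_mod_cast μ.rowLen_anti i j hij.le
  have hij' : (i : ℚ) + 1 ≤ j := by exact_mod_cast hij
  simp only [mayaCoord]
  linarith

lemma lt_mayaCoord_iff {μ : YoungDiagram} {m : ℕ} (hm : μ.colLen 0 ≤ m) {d : ℚ}
    (hd : |d| < 1 / 2) (i : ℕ) : -(m : ℚ) + d < mayaCoord μ i ↔ i < m := by
  rw [abs_lt] at hd
  constructor
  · intro h
    by_contra! hi
    have hi' : (m : ℚ) ≤ i := by exact_mod_cast hi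
    simp only [mayaCoord, μ.rowLen_eq_zero_of_colLen_le (hm.trans hi), CharP.cast_eq_zero] at h
    linarith
  · intro hi
    have hi' : (i : ℚ) + 1 ≤ m := by exact_mod_cast hi
    have hrow : (0 : ℚ) ≤ μ.rowLen i := Nat.cast_nonneg _
    simp only [mayaCoord]
    linarith

lemma sum_range_mayaCoord_add_sq (μ : YoungDiagram) {m : ℕ} (hm : μ.colLen 0 ≤ m) (t : ℚ) :
    ∑ i ∈ range m, (mayaCoord μ i + t) ^ 2
      = kappa μ + 2 * t * μ.card + halfIntSqSum (m - t) + halfIntSqSum t := by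
  have hterm : ∀ i, (mayaCoord μ i + t) ^ 2
      = ((μ.rowLen i : ℚ) ^ 2 - μ.rowLen i - 2 * i * μ.rowLen i) + 2 * t * μ.rowLen i
        + ((i : ℚ) + 1 / 2 - t) ^ 2 := fun i => by simp only [mayaCoord]; ring
  simp only [hterm, sum_add_distrib, ← mul_sum, sum_range_add_half_sub_sq,
    kappa_eq_sum_range_rowLen μ hm, μ.card_eq_sum_range_rowLen hm, Nat.cast_sum]
  ring

lemma sum_range_mayaCoord_sq (μ : YoungDiagram) {m : ℕ} (hm : μ.colLen 0 ≤ m) :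
    ∑ i ∈ range m, mayaCoord μ i ^ 2 = kappa μ + halfIntSqSum m := by
  simpa [halfIntSqSum] using sum_range_mayaCoord_add_sq μ hm 0

/-- `p̃_r = p_r + chargeOffset N r`, with `r : Fin N` standing for the label `r + 1`. -/
def chargeOffset (N : ℕ) (r : Fin N) : ℚ :=
  (((r : ℚ) + 1) - ((N : ℚ) + 1) / 2) / N

lemma abs_chargeOffset_lt {N : ℕ} (r : Fin N) : |chargeOffset N r| < 1 / 2 := by
  have hN : (0 : ℚ) < N := by exact_mod_cast r.pos
  have hr : (r : ℚ) + 1 ≤ N := by exact_mod_cast r.isLt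
  have hr0 : (0 : ℚ) ≤ r := Nat.cast_nonneg _
  rw [chargeOffset, abs_div, abs_of_pos hN, div_lt_iff₀ hN, abs_lt]
  constructor <;> linarith

lemma chargeOffset_rev {N : ℕ} (r : Fin N) : chargeOffset N r.rev = -chargeOffset N r := by
  have hrev : ((r.rev : ℕ) : ℚ) + r + 1 = N := by
    have := r.isLt
    exact_mod_cast (by rw [Fin.val_rev]; omega : (r.rev : ℕ) + r + 1 = N)
  rw [chargeOffset, chargeOffset, ← neg_div]
  congr 1
  linarith

lemma sum_comp_chargeOffset_eq_zero {N : ℕ} {g : ℚ → ℚ} (hg : g.Odd) :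
    ∑ r : Fin N, g (chargeOffset N r) = 0 := by
  have hg' : ∀ y, g (-y) = -g y := hg
  have h := Equiv.sum_comp Fin.revPerm fun r : Fin N => g (chargeOffset N r)
  simp only [Fin.revPerm_apply, chargeOffset_rev, hg', sum_neg_distrib] at h
  linarith

lemma sum_chargeOffset_sq {N : ℕ} (hN : N ≠ 0) :
    ∑ r : Fin N, chargeOffset N r ^ 2 = ((N : ℚ) ^ 2 - 1) / (12 * N) := by
  have hterm : ∀ r : Fin N, chargeOffset N r ^ 2 = ((r : ℚ) + 1 / 2 - N / 2) ^ 2 / N ^ 2 :=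
    fun r => by rw [chargeOffset, div_pow]; ring
  rw [sum_congr rfl fun r _ => hterm r, ← sum_div,
    Fin.sum_univ_eq_sum_range (fun i : ℕ => ((i : ℚ) + 1 / 2 - N / 2) ^ 2),
    sum_range_add_half_sub_sq, halfIntSqSum, halfIntSqSum]
  field_simp
  ring

/-- The identity behind `maya ⊥ = chargedMaya N (fun _ => ⊥) 0`. -/
lemma sq_mul_sum_halfIntSqSum_sub_chargeOffset {N : ℕ} (hN : N ≠ 0) (L : ℚ) :
    (N : ℚ) ^ 2 * ∑ r : Fin N, halfIntSqSum (L - chargeOffset N r) = halfIntSqSum (N * L) := by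
  have hsplit : ∀ y, halfIntSqSum (L - y)
      = (L ^ 3 / 3 - L / 12 + L * y ^ 2) + (-(L ^ 2 - 1 / 12) * y - y ^ 3 / 3) :=
    fun y => by simp only [halfIntSqSum]; ring
  have hodd : (fun y : ℚ => -(L ^ 2 - 1 / 12) * y - y ^ 3 / 3).Odd := fun y => by ring
  rw [sum_congr rfl fun r _ => hsplit _, sum_add_distrib, sum_comp_chargeOffset_eq_zero hodd,
    sum_add_distrib, ← mul_sum, sum_chargeOffset_sq hN, sum_const, card_univ, Fintype.card_fin,
    nsmul_eq_mul, halfIntSqSum]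
  field_simp
  ring

def chargedCoord (N : ℕ) (μ : YoungDiagram) (k : ℤ) (r : Fin N) (i : ℕ) : ℚ :=
  N * (mayaCoord μ i + k + chargeOffset N r)

lemma chargedMaya_eq_iUnion_range (N : ℕ) (lam : Fin N → YoungDiagram) (p : Fin N → ℤ) :
    chargedMaya N lam p = ⋃ r, Set.range (chargedCoord N (lam r) (p r) r) := rfl

lemma chargedCoord_eq_mul_add_half {N : ℕ} (μ : YoungDiagram) (k : ℤ) (r : Fin N) (i : ℕ) :
    chargedCoord N μ k r i = N * (((μ.rowLen i : ℤ) - i + k - 1 : ℤ) : ℚ) + r + 1 / 2 := by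
  have hN : (N : ℚ) ≠ 0 := by exact_mod_cast r.pos.ne'
  rw [chargedCoord, mayaCoord, chargeOffset]
  push_cast
  field_simp
  ring

lemma eq_of_chargedCoord_eq {N : ℕ} {μ ν : YoungDiagram} {k l : ℤ} {r s : Fin N}
    {i j : ℕ} (h : chargedCoord N μ k r i = chargedCoord N ν l s j) : r = s := by
  rw [chargedCoord_eq_mul_add_half, chargedCoord_eq_mul_add_half, add_left_inj] at h
  have hz : (N : ℤ) * ((μ.rowLen i : ℤ) - i + k - 1) + r
      = N * ((ν.rowLen j : ℤ) - j + l - 1) + s := by exact_mod_cast h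
  have hmod (c : ℤ) (t : Fin N) : ((N : ℤ) * c + t) % N = t := by
    rw [add_comm, Int.add_mul_emod_self_left, Int.emod_eq_of_lt (by positivity)]
    exact_mod_cast t.isLt
  have := hmod ((μ.rowLen i : ℤ) - i + k - 1) r
  rw [hz, hmod] at this
  exact Fin.ext (by exact_mod_cast this.symm)

lemma strictAnti_chargedCoord {N : ℕ} (μ : YoungDiagram) (k : ℤ) (r : Fin N) :
    StrictAnti (chargedCoord N μ k r) :=
  ((strictAnti_mayaCoord μ).add_const _ |>.add_const _).const_mul (by exact_mod_cast r.pos)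

lemma lt_chargedCoord_iff {N : ℕ} {μ : YoungDiagram} {k : ℤ} {r : Fin N} {m : ℕ} {L : ℚ}
    (hm : (m : ℚ) = L + k) (hcol : μ.colLen 0 ≤ m) (i : ℕ) :
    -(N * L) < chargedCoord N μ k r i ↔ i < m := by
  have hN : (0 : ℚ) < N := by exact_mod_cast r.pos
  rw [← lt_mayaCoord_iff hcol (d := -chargeOffset N r) (by simpa using abs_chargeOffset_lt r),
    chargedCoord, show -((N : ℚ) * L) = N * -L by ring, mul_lt_mul_iff_right₀ hN, hm]
  constructor <;> intro <;> linarith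

lemma sum_range_chargedCoord_sq {N : ℕ} {μ : YoungDiagram} {k : ℤ} {r : Fin N} {m : ℕ}
    {L : ℚ} (hm : (m : ℚ) = L + k) (hcol : μ.colLen 0 ≤ m) :
    ∑ i ∈ range m, chargedCoord N μ k r i ^ 2
      = N ^ 2 * (kappa μ + 2 * ((k + chargeOffset N r) * μ.card)
        + halfIntSqSum (L - chargeOffset N r) + halfIntSqSum (k + chargeOffset N r)) := by
  simp only [chargedCoord, mul_pow, add_assoc, ← mul_sum]
  rw [sum_range_mayaCoord_add_sq μ hcol, hm]
  ring_nf

lemma coe_image_range_eq_range_inter_Ioi {α : Type*} [Preorder α] [DecidableEq α]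
    {x : ℕ → α} {B : α} {m : ℕ} (h : ∀ i, B < x i ↔ i < m) :
    (((range m).image x : Finset α) : Set α) = Set.range x ∩ Set.Ioi B := by
  ext y
  simp only [coe_image, coe_range, Set.mem_image, Set.mem_Iio, Set.mem_inter_iff,
    Set.mem_range, Set.mem_Ioi]
  constructor
  · rintro ⟨i, hi, rfl⟩
    exact ⟨⟨i, rfl⟩, (h i).2 hi⟩
  · rintro ⟨⟨i, rfl⟩, hi⟩
    exact ⟨i, (h i).1 hi, rfl⟩

lemma exists_truncation_level {N : ℕ} (hN : 1 ≤ N) (μ : YoungDiagram)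
    (lam : Fin N → YoungDiagram) (p : Fin N → ℤ) :
    ∃ L : ℕ, ∃ m : Fin N → ℕ, μ.colLen 0 ≤ N * L ∧ (∀ r, (m r : ℚ) = L + p r) ∧
      ∀ r, (lam r).colLen 0 ≤ m r := by
  set L := μ.colLen 0 + ∑ r, ((lam r).colLen 0 + (p r).natAbs)
  have hL : ∀ r, (lam r).colLen 0 + (p r).natAbs ≤ L := fun r =>
    (single_le_sum (f := fun r => (lam r).colLen 0 + (p r).natAbs)
      (fun _ _ => Nat.zero_le _) (mem_univ r)).trans (Nat.le_add_left _ _)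
  refine ⟨L, fun r => (L + p r).toNat, ?_, fun r => ?_, fun r => ?_⟩
  · exact (Nat.le_add_right _ _).trans (Nat.le_mul_of_pos_left L hN)
  · have := hL r
    exact_mod_cast (by omega : (((L + p r).toNat : ℕ) : ℤ) = L + p r)
  · show (lam r).colLen 0 ≤ (L + p r).toNat
    have := hL r
    omega

lemma sum_sq_mayaCoord_eq_sum_sq_chargedCoord {N : ℕ} {lam : Fin N → YoungDiagram}
    {p : Fin N → ℤ} {μ : YoungDiagram} (h : maya μ = chargedMaya N lam p) {L : ℕ}
    {m : Fin N → ℕ} (hμ : μ.colLen 0 ≤ N * L) (hm : ∀ r, (m r : ℚ) = L + p r)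
    (hlam : ∀ r, (lam r).colLen 0 ≤ m r) :
    ∑ i ∈ range (N * L), mayaCoord μ i ^ 2
      = ∑ r, ∑ i ∈ range (m r), chargedCoord N (lam r) (p r) r i ^ 2 := by
  set G : Fin N → Finset ℚ := fun r => (range (m r)).image (chargedCoord N (lam r) (p r) r)
  have hμcoe : ((range (N * L)).image (mayaCoord μ) : Set ℚ)
      = maya μ ∩ Set.Ioi (-(N * L : ℚ)) :=
    coe_image_range_eq_range_inter_Ioi fun i => by
      simpa [Nat.cast_mul] using lt_mayaCoord_iff hμ (d := 0) (by norm_num) i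
  have hGcoe : ∀ r, (G r : Set ℚ)
      = Set.range (chargedCoord N (lam r) (p r) r) ∩ Set.Ioi (-(N * L : ℚ)) := fun r =>
    coe_image_range_eq_range_inter_Ioi (lt_chargedCoord_iff (hm r) (hlam r))
  have hunion : (range (N * L)).image (mayaCoord μ) = univ.biUnion G := by
    apply coe_injective
    rw [hμcoe, coe_biUnion, h, chargedMaya_eq_iUnion_range, Set.iUnion_inter]
    simp [hGcoe]
  have hdisj : ((univ : Finset (Fin N)) : Set (Fin N)).PairwiseDisjoint G := by
    intro r _ s _ hrs
    simp only [Function.onFun, disjoint_left, G, mem_image]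
    rintro _ ⟨i, -, rfl⟩ ⟨j, -, hij⟩
    exact hrs (eq_of_chargedCoord_eq hij).symm
  rw [← sum_image (f := fun x => x ^ 2) (strictAnti_mayaCoord μ).injective.injOn, hunion,
    sum_biUnion hdisj]
  exact sum_congr rfl fun r _ => sum_image (strictAnti_chargedCoord _ _ r).injective.injOn

/-- `κ` formula for the `N`-component decomposition of a neutral partition:
`κ(μ) = N² ∑_r κ(λ⁽ʳ⁾) + 2N² ∑_r p̃_r |λ⁽ʳ⁾| + (N²/3) ∑_r p̃_r³`, where
`p̃_r = p_r + (r - (N+1)/2)/N` (with `r` 1-indexed). -/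
theorem charged_partition_kappa (N : ℕ) (hN : 1 ≤ N)
    (lam : Fin N → YoungDiagram) (p : Fin N → ℤ) (hp : ∑ r, p r = 0)
    (μ : YoungDiagram) (h : maya μ = chargedMaya N lam p) :
    (kappa μ : ℚ) = (N : ℚ) ^ 2 * ∑ r, (kappa (lam r) : ℚ)
      + 2 * (N : ℚ) ^ 2 * ∑ r : Fin N,
          ((p r : ℚ) + (((r : ℚ) + 1) - ((N : ℚ) + 1) / 2) / N) * ((lam r).card : ℚ)
      + (N : ℚ) ^ 2 / 3 * ∑ r : Fin N,
          ((p r : ℚ) + (((r : ℚ) + 1) - ((N : ℚ) + 1) / 2) / N) ^ 3 := by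
  have hoffset : ∀ r : Fin N, (((r : ℚ) + 1) - ((N : ℚ) + 1) / 2) / N = chargeOffset N r :=
    fun _ => rfl
  simp only [hoffset]
  obtain ⟨L, m, hμ, hm, hlam⟩ := exists_truncation_level hN μ lam p
  have key := sum_sq_mayaCoord_eq_sum_sq_chargedCoord h hμ hm hlam
  rw [sum_range_mayaCoord_sq μ hμ,
    sum_congr rfl fun r _ => sum_range_chargedCoord_sq (hm r) (hlam r), ← mul_sum,
    sum_add_distrib, sum_add_distrib, sum_add_distrib, ← mul_sum] at key
  have hcharge : ∑ r, ((p r : ℚ) + chargeOffset N r) = 0 := by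
    rw [sum_add_distrib, ← Int.cast_sum, hp, Int.cast_zero, zero_add]
    exact sum_comp_chargeOffset_eq_zero (g := id) fun _ => rfl
  have hcubic : ∑ r, halfIntSqSum ((p r : ℚ) + chargeOffset N r)
      = (∑ r, ((p r : ℚ) + chargeOffset N r) ^ 3) / 3 := by
    simp only [halfIntSqSum, sum_sub_distrib, ← sum_div, hcharge]
    ring
  have hvac := sq_mul_sum_halfIntSqSum_sub_chargeOffset (N := N) (by omega) L
  push_cast at key
  linear_combination key + hvac + (N : ℚ) ^ 2 * hcubic
end

section
/- For the SU(3) ground partition with charges p_1 > p_2 > p_3, p_1 + p_2 + p_3 = 0, the hook lengths of the boxes factor by bicolour: the (r,s)-boxes (1 ≤ r < s ≤ 3) contribute ∏_{(r,s)-boxes}(q^{-h/2} - q^{h/2})^{-1} = ∏_{k=1}^{p_r - p_s - 1} (q^{-3(p̃_r - p̃_s - k)/2} - q^{3(p̃_r - p̃_s - k)/2})^{-k}, where p̃_r = p_r + (r-2)/3. -/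
/-- The hook length of the (0-indexed) box `(i, j)` of a Young diagram:
`h(i,j) = μ_i - j + μ'_j - i + 1` in 1-indexed terms. -/
def hookLen (μ : YoungDiagram) (i j : ℕ) : ℕ :=
  μ.rowLen i + μ.colLen j - i - j - 1

/-- The Maya diagram of the SU(3) ground partition with charges `p : Fin 3 → ℤ`
(1-indexed charges `p_{r+1} = p r`): `⋃_{r} {3(-i + 1/2 + p̃_r) : i ≥ 1}` with
`p̃_r = p_r + (r - 2)/3` in 1-indexed terms, i.e. `p̃ (r : Fin 3) = p r + (r - 1)/3`. -/
def su3GroundMaya (p : Fin 3 → ℤ) : Set ℚ :=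
  ⋃ r : Fin 3, Set.range fun i : ℕ =>
    3 * (-(i : ℚ) - 1 / 2 + ((p r : ℚ) + ((r : ℚ) - 1) / 3))

/-! Walking along the boundary of a Young diagram, its unit steps get consecutive integer labels:
the rows end at the labels `μ_i - i` (the Maya diagram shifted by `1/2`), the columns at the
complementary labels, a box is a pair (row label `a`, column label `b`) with `b < a`, and its hook
length is `a - b`. For the SU(3) ground partition the row labels of colour `r` are the
`n ≡ T_r (mod 3)` with `n ≤ T_r`, where `T_r = 3 p̃_r - 3/2`, so the column labels of colour `s`
are the `n ≡ T_s` with `n > T_s`. Writing `a = T_r - 3u` and `b = T_s + 3(v + 1)`, an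
`(r,s)`-box has hook `T_r - T_s - 3k = 3(p̃_r - p̃_s - k)` with `k = u + v + 1`, and each `k`
comes from exactly `k` pairs `(u, v)`. -/

theorem Finset.prod_sigma_Icc_eq_prod_pow {M : Type*} [CommMonoid M] (K : ℕ) (g : ℕ → M) :
    ∏ x ∈ (Finset.Icc 1 K).sigma (Finset.Icc 1 ·), g x.1 = ∏ k ∈ Finset.Icc 1 K, g k ^ k := by
  rw [Finset.prod_sigma]
  refine Finset.prod_congr rfl fun k _ => ?_
  dsimp only
  rw [Finset.prod_const, Nat.card_Icc, Nat.add_sub_cancel]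

namespace YoungDiagram

/-- Label of the vertical boundary step at the end of row `i`. -/
def rowEdge (μ : YoungDiagram) (i : ℕ) : ℤ := μ.rowLen i - i

/-- Label of the horizontal boundary step at the bottom of column `j`. -/
def colEdge (μ : YoungDiagram) (j : ℕ) : ℤ := j + 1 - μ.colLen j

variable {μ : YoungDiagram}

theorem rowEdge_strictAnti (μ : YoungDiagram) : StrictAnti μ.rowEdge := fun i i' h => by
  have := μ.rowLen_anti i i' h.le
  unfold rowEdge
  omega

theorem colEdge_strictMono (μ : YoungDiagram) : StrictMono μ.colEdge := fun j j' h => by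
  have := μ.colLen_anti j j' h.le
  unfold colEdge
  omega

theorem mem_iff_colEdge_lt_rowEdge {i j : ℕ} : (i, j) ∈ μ ↔ μ.colEdge j < μ.rowEdge i := by
  have hrow : (i, j) ∈ μ ↔ j < μ.rowLen i := mem_iff_lt_rowLen
  have hcol : (i, j) ∈ μ ↔ i < μ.colLen j := mem_iff_lt_colLen
  unfold rowEdge colEdge
  by_cases hm : (i, j) ∈ μ <;> simp only [hm, true_iff, false_iff, not_lt] at hrow hcol ⊢ <;> omega

theorem rowEdge_ne_colEdge (i j : ℕ) : μ.rowEdge i ≠ μ.colEdge j := by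
  have hrow : (i, j) ∈ μ ↔ j < μ.rowLen i := mem_iff_lt_rowLen
  have hcol : (i, j) ∈ μ ↔ i < μ.colLen j := mem_iff_lt_colLen
  unfold rowEdge colEdge
  by_cases hm : (i, j) ∈ μ <;> simp only [hm, true_iff, false_iff, not_lt] at hrow hcol <;> omega

theorem exists_colEdge_eq_of_forall_rowEdge_ne {n : ℤ} (h : ∀ i, μ.rowEdge i ≠ n) :
    ∃ j, μ.colEdge j = n := by
  classical
  have hex : ∃ i, μ.rowEdge i < n := ⟨(μ.rowLen 0 - n + 1).toNat, by
    have := μ.rowLen_anti 0 (μ.rowLen 0 - n + 1).toNat (Nat.zero_le _)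
    unfold rowEdge
    omega⟩
  set i := Nat.find hex
  have hi : μ.rowEdge i < n := Nat.find_spec hex
  have hprev : ∀ i' < i, n < μ.rowEdge i' := fun i' hi' =>
    lt_of_le_of_ne (not_lt.mp (Nat.find_min hex hi')) (h i').symm
  -- the step labelled `n` is the horizontal step at the bottom of column `n + i - 1`, of length `i`
  set j := (n + i - 1).toNat
  have hj : (j : ℤ) = n + i - 1 := Int.toNat_of_nonneg (by unfold rowEdge at hi; omega)
  have hbelow : (i, j) ∉ μ := fun hm => by
    have := mem_iff_lt_rowLen.mp hm
    unfold rowEdge at hi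
    omega
  have hcol : μ.colLen j = i := by
    refine le_antisymm (not_lt.mp fun hlt => hbelow (mem_iff_lt_colLen.mpr hlt)) ?_
    rcases Nat.eq_zero_or_pos i with h0 | hpos
    · omega
    have := hprev (i - 1) (by omega)
    have habove : (i - 1, j) ∈ μ := mem_iff_lt_rowLen.mpr (by unfold rowEdge at this; omega)
    exact Nat.le_of_pred_lt (mem_iff_lt_colLen.mp habove)
  refine ⟨j, ?_⟩
  unfold colEdge
  omega

theorem mem_range_colEdge_iff {n : ℤ} : n ∈ Set.range μ.colEdge ↔ n ∉ Set.range μ.rowEdge := by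
  constructor
  · rintro ⟨j, rfl⟩ ⟨i, hi⟩
    exact rowEdge_ne_colEdge i j hi
  · exact fun h => exists_colEdge_eq_of_forall_rowEdge_ne fun i hi => h ⟨i, hi⟩

theorem hookLen_eq_rowEdge_sub_colEdge {i j : ℕ} (h : (i, j) ∈ μ) :
    (hookLen μ i j : ℤ) = μ.rowEdge i - μ.colEdge j := by
  have := mem_iff_lt_rowLen.mp h
  have := mem_iff_lt_colLen.mp h
  unfold hookLen rowEdge colEdge
  omega

theorem maya_eq_image_range_rowEdge (μ : YoungDiagram) :
    maya μ = (fun n : ℤ => (n : ℚ) - 1 / 2) '' Set.range μ.rowEdge := by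
  rw [← Set.range_comp]
  unfold maya rowEdge
  congr
  funext i
  simp

theorem edge_bounds_of_mem_filter_modEq {tr ts : ℤ}
    (hr : ∀ n, n ≡ tr [ZMOD 3] → (n ∈ Set.range μ.rowEdge ↔ n ≤ tr))
    (hs : ∀ n, n ≡ ts [ZMOD 3] → (n ∈ Set.range μ.rowEdge ↔ n ≤ ts)) {c : ℕ × ℕ}
    (hc : c ∈ μ.cells.filter fun c => μ.rowEdge c.1 ≡ tr [ZMOD 3] ∧ μ.colEdge c.2 ≡ ts [ZMOD 3]) :
    μ.colEdge c.2 < μ.rowEdge c.1 ∧ μ.rowEdge c.1 ≤ tr ∧ ts < μ.colEdge c.2 := by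
  simp only [Finset.mem_filter, mem_cells] at hc
  obtain ⟨hmem, hrow, hcol⟩ := hc
  refine ⟨mem_iff_colEdge_lt_rowEdge.mp hmem, (hr _ hrow).mp ⟨_, rfl⟩, not_le.mp fun hle => ?_⟩
  exact mem_range_colEdge_iff.mp ⟨_, rfl⟩ ((hs _ hcol).mpr hle)

theorem prod_filter_modEq_hookLen {M : Type*} [CommMonoid M] {tr ts : ℤ}
    (hr : ∀ n, n ≡ tr [ZMOD 3] → (n ∈ Set.range μ.rowEdge ↔ n ≤ tr))
    (hs : ∀ n, n ≡ ts [ZMOD 3] → (n ∈ Set.range μ.rowEdge ↔ n ≤ ts)) (f : ℤ → M) :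
    ∏ c ∈ μ.cells.filter (fun c => μ.rowEdge c.1 ≡ tr [ZMOD 3] ∧ μ.colEdge c.2 ≡ ts [ZMOD 3]),
      f (hookLen μ c.1 c.2) =
      ∏ k ∈ Finset.Icc 1 ((tr - ts - 1) / 3).toNat, f (tr - ts - 3 * k) ^ k := by
  rw [← Finset.prod_sigma_Icc_eq_prod_pow]
  -- with `rowEdge = tr - 3u` and `colEdge = ts + 3w`, the box goes to `⟨u + w, w⟩`
  refine Finset.prod_bij (fun c _ => (⟨((tr - μ.rowEdge c.1 + (μ.colEdge c.2 - ts)) / 3).toNat,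
      ((μ.colEdge c.2 - ts) / 3).toNat⟩ : Σ _ : ℕ, ℕ)) ?_ ?_ ?_ ?_
  · intro c hc
    have := edge_bounds_of_mem_filter_modEq hr hs hc
    have hmod := (Finset.mem_filter.mp hc).2
    simp only [Int.ModEq, Finset.mem_sigma, Finset.mem_Icc] at hmod ⊢
    omega
  · intro c hc c' hc' he
    have := edge_bounds_of_mem_filter_modEq hr hs hc
    have := edge_bounds_of_mem_filter_modEq hr hs hc'
    have hmod := (Finset.mem_filter.mp hc).2
    have hmod' := (Finset.mem_filter.mp hc').2
    simp only [Int.ModEq] at hmod hmod'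
    obtain ⟨hk, hw⟩ := Sigma.mk.inj_iff.mp he
    have hw := eq_of_heq hw
    exact Prod.ext ((rowEdge_strictAnti μ).injective (by omega))
      ((colEdge_strictMono μ).injective (by omega))
  · rintro ⟨k, w⟩ hkw
    simp only [Finset.mem_sigma, Finset.mem_Icc] at hkw
    obtain ⟨i, hi⟩ := (hr (tr - 3 * (k - w)) (by simp only [Int.ModEq]; omega)).mpr (by omega)
    obtain ⟨j, hj⟩ := mem_range_colEdge_iff.mpr fun hmem =>
      absurd ((hs (ts + 3 * w) (by simp only [Int.ModEq]; omega)).mp hmem) (by omega)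
    refine ⟨(i, j), ?_, ?_⟩
    · refine Finset.mem_filter.mpr ⟨mem_iff_colEdge_lt_rowEdge.mpr (by omega), ?_, ?_⟩ <;>
        simp only [Int.ModEq, hi, hj] <;> omega
    · simp only [hi, hj, Sigma.mk.injEq, heq_eq_eq]
      omega
  · intro c hc
    rw [hookLen_eq_rowEdge_sub_colEdge (Finset.mem_filter.mp hc).1]
    have := edge_bounds_of_mem_filter_modEq hr hs hc
    have hmod := (Finset.mem_filter.mp hc).2
    simp only [Int.ModEq] at hmod
    dsimp only
    congr 1
    omega

end YoungDiagram

/-- `T_x = 3 p̃_x - 3/2` for the 0-indexed colour `x`: the top row label of colour `x` in the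
SU(3) ground partition. -/
def su3GroundTop (p : Fin 3 → ℤ) (x : Fin 3) : ℤ := 3 * p x + x - 2

def su3GroundEdges (p : Fin 3 → ℤ) : Set ℤ :=
  ⋃ x : Fin 3, Set.range fun u : ℕ => su3GroundTop p x - 3 * u

theorem su3GroundTop_modEq (p : Fin 3 → ℤ) (x : Fin 3) : su3GroundTop p x ≡ x + 1 [ZMOD 3] := by
  simp only [Int.ModEq, su3GroundTop]
  omega

theorem su3GroundMaya_eq_image (p : Fin 3 → ℤ) :
    su3GroundMaya p = (fun n : ℤ => (n : ℚ) - 1 / 2) '' su3GroundEdges p := by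
  rw [su3GroundEdges, Set.image_iUnion]
  refine Set.iUnion_congr fun x => ?_
  rw [← Set.range_comp]
  congr
  funext u
  simp only [Function.comp_apply, su3GroundTop]
  push_cast
  ring

theorem mem_su3GroundEdges_iff {p : Fin 3 → ℤ} {x : Fin 3} {n : ℤ}
    (hn : n ≡ su3GroundTop p x [ZMOD 3]) : n ∈ su3GroundEdges p ↔ n ≤ su3GroundTop p x := by
  have hx := su3GroundTop_modEq p x
  simp only [su3GroundEdges, Set.mem_iUnion, Set.mem_range]
  constructor
  · rintro ⟨y, u, rfl⟩
    have hy := su3GroundTop_modEq p y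
    have : y = x := Fin.ext (by simp only [Int.ModEq] at hn hx hy; omega)
    subst this
    omega
  · intro hle
    simp only [Int.ModEq] at hn
    exact ⟨x, ((su3GroundTop p x - n) / 3).toNat, by omega⟩

theorem YoungDiagram.range_rowEdge_of_maya_eq {μ : YoungDiagram} {p : Fin 3 → ℤ}
    (hμ : maya μ = su3GroundMaya p) : Set.range μ.rowEdge = su3GroundEdges p := by
  rw [μ.maya_eq_image_range_rowEdge, su3GroundMaya_eq_image] at hμ
  exact Set.image_injective.mpr (fun a b h => by simpa using h) hμ

theorem su3_ground_bicoloured_hooks_general (p : Fin 3 → ℤ)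
    (μ : YoungDiagram) (hμ : maya μ = su3GroundMaya p)
    (q : ℝ) (r s : Fin 3) (hrs : r < s) :
    ∏ c ∈ μ.cells.filter (fun c =>
        ((μ.rowLen c.1 : ℤ) - c.1) % 3 = ((r : ℤ) + 1) % 3 ∧
        ((c.2 : ℤ) + 1 - μ.colLen c.2) % 3 = ((s : ℤ) + 1) % 3),
      (q ^ (-(hookLen μ c.1 c.2 : ℝ) / 2) - q ^ ((hookLen μ c.1 c.2 : ℝ) / 2))⁻¹
      = ∏ k ∈ Finset.Icc 1 (p r - p s - 1).toNat,
          ((q ^ (-(3 : ℝ) * (((p r - p s : ℤ) : ℝ) + ((r : ℝ) - (s : ℝ)) / 3 - k) / 2)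
            - q ^ ((3 : ℝ) * (((p r - p s : ℤ) : ℝ) + ((r : ℝ) - (s : ℝ)) / 3 - k) / 2))⁻¹) ^ k := by
  have hrows : ∀ x n, n ≡ su3GroundTop p x [ZMOD 3] →
      (n ∈ Set.range μ.rowEdge ↔ n ≤ su3GroundTop p x) := fun x n hn => by
    rw [μ.range_rowEdge_of_maya_eq hμ]
    exact mem_su3GroundEdges_iff hn
  have hcolours := μ.prod_filter_modEq_hookLen (hrows r) (hrows s)
    (fun z : ℤ => (q ^ (-(z : ℝ) / 2) - q ^ ((z : ℝ) / 2))⁻¹)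
  simp only [Int.cast_natCast] at hcolours
  have hfilter : μ.cells.filter (fun c =>
        ((μ.rowLen c.1 : ℤ) - c.1) % 3 = ((r : ℤ) + 1) % 3 ∧
        ((c.2 : ℤ) + 1 - μ.colLen c.2) % 3 = ((s : ℤ) + 1) % 3) =
      μ.cells.filter (fun c => μ.rowEdge c.1 ≡ su3GroundTop p r [ZMOD 3] ∧
        μ.colEdge c.2 ≡ su3GroundTop p s [ZMOD 3]) := by
    have hr := su3GroundTop_modEq p r
    have hs := su3GroundTop_modEq p s
    simp only [Int.ModEq] at hr hs ⊢
    simp only [hr, hs, YoungDiagram.rowEdge, YoungDiagram.colEdge]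
  have hK : ((su3GroundTop p r - su3GroundTop p s - 1) / 3).toNat = (p r - p s - 1).toNat := by
    have : (r : ℕ) < s := hrs
    simp only [su3GroundTop]
    omega
  rw [hfilter, hcolours, hK]
  refine Finset.prod_congr rfl fun k _ => ?_
  simp only [su3GroundTop]
  push_cast
  ring_nf

/-- Bicoloured hook products of the SU(3) ground partition: for `r < s` (1-indexed
colours `r + 1 < s + 1`), the `(r,s)`-boxes — those whose row colour is `r` and
column colour is `s`, colours being read off mod 3 from the boundary-edge positions
`μ_i - i + 1` (rows) and `j - μ'_j` (columns) — contribute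
`∏_{(r,s)-boxes} (q^{-h/2} - q^{h/2})⁻¹
  = ∏_{k=1}^{p_r - p_s - 1} (q^{-3(p̃_r - p̃_s - k)/2} - q^{3(p̃_r - p̃_s - k)/2})^{-k}`. -/
theorem su3_ground_bicoloured_hooks (p : Fin 3 → ℤ)
    (h12 : p 1 < p 0) (h23 : p 2 < p 1) (hsum : p 0 + p 1 + p 2 = 0)
    (μ : YoungDiagram) (hμ : maya μ = su3GroundMaya p)
    (q : ℝ) (hq : q ∈ Set.Ioo (0 : ℝ) 1) (r s : Fin 3) (hrs : r < s) :
    ∏ c ∈ μ.cells.filter (fun c =>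
        ((μ.rowLen c.1 : ℤ) - c.1) % 3 = ((r : ℤ) + 1) % 3 ∧
        ((c.2 : ℤ) + 1 - μ.colLen c.2) % 3 = ((s : ℤ) + 1) % 3),
      (q ^ (-(hookLen μ c.1 c.2 : ℝ) / 2) - q ^ ((hookLen μ c.1 c.2 : ℝ) / 2))⁻¹
      = ∏ k ∈ Finset.Icc 1 (p r - p s - 1).toNat,
          ((q ^ (-(3 : ℝ) * (((p r - p s : ℤ) : ℝ) + ((r : ℝ) - (s : ℝ)) / 3 - k) / 2)
            - q ^ ((3 : ℝ) * (((p r - p s : ℤ) : ℝ) + ((r : ℝ) - (s : ℝ)) / 3 - k) / 2))⁻¹) ^ k :=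
  su3_ground_bicoloured_hooks_general p μ hμ q r s hrs
end
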